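/- arXiv:2105.04159 — 6 statements merged into one kernel-verified Lean document; each statement's English description precedes it below -/
import Mathlib

section
/- Let d ≤ n be nonnegative integers and let F be a family of subsets of [n] such that the family of symmetric differences F Δ F = {A Δ B : A, B ∈ F} has VC-dimension at most d. Then |F| ≤ 2 · ∑_{k=0}^{⌊d/2⌋} C(n,k). -/
/-!
Work over `𝔽₂` with the monomials `x ↦ [S ⊆ x]`. If `B` has VC-dimension at most `d`, then on `B`
every monomial is a combination of monomials of degree at most `d`: a larger `S` is not shattered,
so some `S' ⊆ S` differs from every `S ∩ b`, and then `∑_{S' ⊆ T ⊆ S} [T ⊆ b]`, which counts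
`2 ^ (#(S ∩ b) - #S')` sets, vanishes on `B`. Hence `[x = ∅]` agrees on `B = F Δ F` with a
polynomial of degree at most `d`. Over `𝔽₂`, `[S ⊆ a Δ b] = ∑_{T ⊆ S} [T ⊆ a] [S \ T ⊆ b]`, so the
identity matrix `([a = b])_{a, b ∈ F} = ([a Δ b = ∅])` is a sum of rank-one terms in which `T` or
`S \ T` has at most `d / 2` elements. Grouping the terms by their small side bounds its rank `#F`
by twice the number of sets of size at most `d / 2`.
-/

open Finset
open scoped symmDiff

/-- `F` shatters `M` if every subset of `M` arises as `A ∩ M` for some `A ∈ F`. -/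
def ShattersFam {n : ℕ} (F : Finset (Finset (Fin n))) (M : Finset (Fin n)) : Prop :=
  ∀ S ⊆ M, ∃ A ∈ F, A ∩ M = S

/-- The family of symmetric differences `F Δ F`. -/
def symmDiffFam {n : ℕ} (F : Finset (Finset (Fin n))) : Finset (Finset (Fin n)) :=
  Finset.image₂ (· ∆ ·) F F

section Rank

variable {ι κ γ β K : Type*} [CommSemiring K] [StrongRankCondition K] [DecidableEq ι]

theorem card_le_card_of_ite_eq_sum {s : Finset ι} {t : Finset κ} {f g : κ → ι → K}
    (h : ∀ a ∈ s, ∀ b ∈ s, (if a = b then 1 else 0) = ∑ k ∈ t, f k a * g k b) : #s ≤ #t := by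
  let A : Matrix s t K := Matrix.of fun a k => f k a
  let B : Matrix t s K := Matrix.of fun k b => g k b
  have hAB : (1 : Matrix s s K) = A * B := by
    ext a b
    simp only [Matrix.one_apply, Matrix.mul_apply, A, B, Matrix.of_apply, Subtype.ext_iff]
    rw [h a a.2 b b.2, Finset.sum_coe_sort t (fun k => f k a * g k b)]
  calc #s = (1 : Matrix s s K).rank := by simp
    _ = (A * B).rank := by rw [hAB]
    _ ≤ A.rank := A.rank_mul_le_left B
    _ ≤ #t := by simpa using A.rank_le_card_width

theorem card_le_two_mul_card_of_ite_eq_sum [DecidableEq β] {s : Finset ι} {P : Finset γ}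
    {Q : Finset β} {l r : γ → β} (hPQ : ∀ p ∈ P, l p ∈ Q ∨ r p ∈ Q) {w : γ → K}
    {f g : β → ι → K}
    (h : ∀ a ∈ s, ∀ b ∈ s, (if a = b then 1 else 0) = ∑ p ∈ P, w p * f (l p) a * g (r p) b) :
    #s ≤ 2 * #Q := by
  set P₁ := P.filter (l · ∈ Q)
  set P₂ := P.filter (l · ∉ Q)
  let f' : β ⊕ β → ι → K := Sum.elim f fun U a => ∑ p ∈ P₂ with r p = U, w p * f (l p) a
  let g' : β ⊕ β → ι → K := Sum.elim (fun T b => ∑ p ∈ P₁ with l p = T, w p * g (r p) b) g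
  have hsplit : ∀ a b, ∑ p ∈ P, w p * f (l p) a * g (r p) b
      = ∑ k ∈ Q.disjSum Q, f' k a * g' k b := by
    intro a b
    have h₁ : ∑ p ∈ P₁, w p * f (l p) a * g (r p) b
        = ∑ T ∈ Q, f T a * ∑ p ∈ P₁ with l p = T, w p * g (r p) b := by
      rw [← sum_fiberwise_of_maps_to (fun p hp => (mem_filter.1 hp).2)]
      refine sum_congr rfl fun T _ => ?_
      rw [mul_sum]
      refine sum_congr rfl fun p hp => ?_
      rw [(mem_filter.1 hp).2]
      ring
    have h₂ : ∑ p ∈ P₂, w p * f (l p) a * g (r p) b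
        = ∑ U ∈ Q, (∑ p ∈ P₂ with r p = U, w p * f (l p) a) * g U b := by
      rw [← sum_fiberwise_of_maps_to (g := r) fun p hp =>
        (hPQ p (mem_filter.1 hp).1).resolve_left (mem_filter.1 hp).2]
      refine sum_congr rfl fun U _ => ?_
      rw [sum_mul]
      refine sum_congr rfl fun p hp => ?_
      rw [(mem_filter.1 hp).2]
    rw [sum_disjSum, ← sum_filter_add_sum_filter_not P (l · ∈ Q), h₁, h₂]
    rfl
  have := card_le_card_of_ite_eq_sum (t := Q.disjSum Q) (f := f') (g := g')
    fun a ha b hb => (h a ha b hb).trans (hsplit a b)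
  rwa [card_disjSum, ← two_mul] at this

end Rank

section SubsetIndicator

variable {α : Type*} [DecidableEq α]

/-- The monomial `∏ i ∈ S, xᵢ` over `𝔽₂`, evaluated at the indicator vector of `x`. -/
def subsetIndicator (S x : Finset α) : ZMod 2 := if S ⊆ x then 1 else 0

theorem sum_subsetIndicator (X : Finset (Finset α)) (x : Finset α) :
    ∑ T ∈ X, subsetIndicator T x = #{T ∈ X | T ⊆ x} := by
  simp [subsetIndicator, sum_boole]

theorem natCast_card_Icc_finset_zmod_two (s t : Finset α) :
    (#(Icc s t) : ZMod 2) = if s = t then 1 else 0 := by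
  by_cases hst : s ⊆ t
  · rw [card_Icc_finset hst]
    obtain rfl | hne := eq_or_ne s t
    · simp
    · have hpos : 0 < #t - #s := Nat.sub_pos_of_lt (card_lt_card (hst.ssubset_of_ne hne))
      rw [if_neg hne, Nat.cast_pow, Nat.cast_ofNat, show (2 : ZMod 2) = 0 from rfl,
        zero_pow hpos.ne']
  · rw [Icc_eq_empty hst, if_neg fun h => hst h.le, card_empty, Nat.cast_zero]

theorem subsetIndicator_symmDiff (S a b : Finset α) :
    subsetIndicator S (a ∆ b) =
      ∑ T ∈ S.powerset, subsetIndicator T a * subsetIndicator (S \ T) b := by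
  have hfilter : {T ∈ S.powerset | T ⊆ a ∧ S \ T ⊆ b} = Icc (S \ b) (S ∩ a) := by
    ext T
    simp only [mem_filter, mem_powerset, mem_Icc, subset_iff, mem_sdiff, mem_inter]
    grind
  have hcond : S ⊆ a ∆ b ↔ S \ b = S ∩ a := by
    simp only [Finset.ext_iff, subset_iff, mem_sdiff, mem_inter, mem_symmDiff]
    grind
  simp only [subsetIndicator, ite_zero_mul_ite_zero, mul_one]
  rw [sum_boole, hfilter, natCast_card_Icc_finset_zmod_two]
  exact if_congr hcond rfl rfl

end SubsetIndicator

section LowDegree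

variable {α : Type*} [Fintype α] [DecidableEq α]

variable (α) in
def setsOfCardLE (d : ℕ) : Finset (Finset α) := {T | #T ≤ d}

theorem card_setsOfCardLE_le (d : ℕ) :
    #(setsOfCardLE α d) ≤ ∑ k ∈ range (d + 1), (Fintype.card α).choose k := by
  simp_rw [← card_univ, ← card_powersetCard]
  refine (card_le_card fun T hT => mem_biUnion.2 ⟨#T, ?_⟩).trans card_biUnion_le
  simpa [setsOfCardLE, Nat.lt_succ_iff] using hT

def lowDegreeOn (B : Finset (Finset α)) (d : ℕ) : Submodule (ZMod 2) (Finset α → ZMod 2) where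
  carrier := {g | ∃ c : Finset α → ZMod 2,
    ∀ b ∈ B, g b = ∑ S ∈ setsOfCardLE α d, c S * subsetIndicator S b}
  add_mem' := by
    rintro g₁ g₂ ⟨c₁, h₁⟩ ⟨c₂, h₂⟩
    exact ⟨c₁ + c₂, fun b hb => by simp [h₁ b hb, h₂ b hb, add_mul, sum_add_distrib]⟩
  zero_mem' := ⟨0, by simp⟩
  smul_mem' := by
    rintro r g ⟨c, h⟩
    exact ⟨r • c, fun b hb => by simp [h b hb, mul_sum, mul_assoc]⟩

variable {B : Finset (Finset α)} {d : ℕ}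

theorem mem_lowDegreeOn_of_eqOn {g h : Finset α → ZMod 2} (hg : g ∈ lowDegreeOn B d)
    (hgh : ∀ b ∈ B, h b = g b) : h ∈ lowDegreeOn B d := by
  obtain ⟨c, hc⟩ := hg
  exact ⟨c, fun b hb => (hgh b hb).trans (hc b hb)⟩

theorem subsetIndicator_mem_lowDegreeOn (hB : B.vcDim ≤ d) (S : Finset α) :
    subsetIndicator S ∈ lowDegreeOn B d := by
  induction S using Finset.strongInduction with
  | H S ih =>
  by_cases hS : #S ≤ d
  · refine ⟨Pi.single S 1, fun b _ => ?_⟩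
    rw [sum_eq_single_of_mem S (by simpa [setsOfCardLE] using hS)]
    · simp
    · intro T _ hTS
      simp [hTS]
  obtain ⟨S', hS'S, hS'⟩ : ∃ S' ⊆ S, ∀ b ∈ B, S ∩ b ≠ S' := by
    by_contra! hshatter
    exact hS ((Shatters.card_le_vcDim hshatter).trans hB)
  have hvanish : ∀ b ∈ B, ∑ T ∈ Icc S' S, subsetIndicator T b = 0 := by
    intro b hb
    have : {T ∈ Icc S' S | T ⊆ b} = Icc S' (S ∩ b) := by
      ext T
      simp only [mem_filter, mem_Icc, subset_inter_iff]
      tauto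
    rw [sum_subsetIndicator, this, natCast_card_Icc_finset_zmod_two, if_neg (hS' b hb).symm]
  refine mem_lowDegreeOn_of_eqOn (g := ∑ T ∈ (Icc S' S).erase S, subsetIndicator T)
    (sum_mem fun T hT => ih T ?_) fun b hb => ?_
  · obtain ⟨hTS, hT⟩ := mem_erase.1 hT
    exact (mem_Icc.1 hT).2.ssubset_of_ne hTS
  · have := hvanish b hb
    rwa [← add_sum_erase _ _ (mem_Icc.2 ⟨hS'S, subset_rfl⟩), CharTwo.add_eq_zero,
      ← Finset.sum_apply] at this

theorem ite_eq_empty_mem_lowDegreeOn (hB : B.vcDim ≤ d) :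
    (fun x : Finset α => if x = ∅ then (1 : ZMod 2) else 0) ∈ lowDegreeOn B d := by
  have hsum : (fun x : Finset α => if x = ∅ then (1 : ZMod 2) else 0) =
      ∑ T, subsetIndicator T := by
    ext x
    have : {T ∈ (univ : Finset (Finset α)) | T ⊆ x} = Icc ∅ x := by
      ext T
      simp
    rw [Finset.sum_apply, sum_subsetIndicator, this, natCast_card_Icc_finset_zmod_two]
    simp only [eq_comm]
  rw [hsum]
  exact sum_mem fun T _ => subsetIndicator_mem_lowDegreeOn hB T

end LowDegree

theorem card_le_two_mul_sum_choose_of_vcDim_symmDiff_le {α : Type*} [Fintype α] [DecidableEq α]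
    {F : Finset (Finset α)} {d : ℕ} (hF : (image₂ (· ∆ ·) F F).vcDim ≤ d) :
    #F ≤ 2 * ∑ k ∈ range (d / 2 + 1), (Fintype.card α).choose k := by
  obtain ⟨c, hc⟩ := ite_eq_empty_mem_lowDegreeOn hF
  have hexpand : ∀ a ∈ F, ∀ b ∈ F, (if a = b then 1 else 0) =
      ∑ p ∈ (setsOfCardLE α d).sigma powerset,
        c p.1 * subsetIndicator p.2 a * subsetIndicator (p.1 \ p.2) b := by
    intro a ha b hb
    have hab : (if a = b then (1 : ZMod 2) else 0) = if a ∆ b = ∅ then 1 else 0 := by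
      simp only [← bot_eq_empty, symmDiff_eq_bot]
    rw [hab, sum_sigma]
    refine (hc _ (mem_image₂_of_mem ha hb)).trans (sum_congr rfl fun S _ => ?_)
    simp only [subsetIndicator_symmDiff, mul_sum, mul_assoc]
  have hsmall : ∀ p ∈ (setsOfCardLE α d).sigma powerset,
      p.2 ∈ setsOfCardLE α (d / 2) ∨ p.1 \ p.2 ∈ setsOfCardLE α (d / 2) := by
    rintro ⟨S, T⟩ hp
    simp only [mem_sigma, setsOfCardLE, mem_filter, mem_univ, true_and, mem_powerset] at hp ⊢
    have := card_sdiff_add_card_eq_card hp.2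
    omega
  exact (card_le_two_mul_card_of_ite_eq_sum hsmall hexpand).trans
    (Nat.mul_le_mul_left 2 (card_setsOfCardLE_le _))

theorem dvir_moran_general {n d : ℕ} (F : Finset (Finset (Fin n)))
    (hVC : ∀ M : Finset (Fin n), ShattersFam (symmDiffFam F) M → M.card ≤ d) :
    F.card ≤ 2 * ∑ k ∈ Finset.range (d / 2 + 1), n.choose k := by
  have hF : (symmDiffFam F).vcDim ≤ d := Finset.sup_le fun M hM => hVC M fun S hS => by
    obtain ⟨A, hA, hMA⟩ := mem_shatterer.1 hM hS
    exact ⟨A, hA, by rw [inter_comm, hMA]⟩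
  simpa using card_le_two_mul_sum_choose_of_vcDim_symmDiff_le hF

theorem dvir_moran {n d : ℕ} (hdn : d ≤ n) (F : Finset (Finset (Fin n)))
    (hVC : ∀ M : Finset (Fin n), ShattersFam (symmDiffFam F) M → M.card ≤ d) :
    F.card ≤ 2 * ∑ k ∈ Finset.range (d / 2 + 1), n.choose k :=
  dvir_moran_general F hVC
end

section
/- Let d < n be positive integers with d ≡ r (mod 2) for some r ∈ {0,1}. Let F be a family of subsets of [n] with VC-dimension of F Δ F at most d. Then |F| ≤ 2^r · ∑_{k=0}^{⌊d/2⌋} C(n−r, k). -/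
/-!
Down-compressing `F` in a coordinate `i` maps `F ∆ F` into the `i`-compression of `F ∆ F`, and
down-compressions never create shattered sets, so the bound on the VC-dimension survives; one
compression per coordinate makes `F` a lower set of the same size. For a lower set, `F ∆ F`
contains every subset of `A ∪ B` (`A, B ∈ F`), so `#(A ∪ B) ≤ d` throughout `F`.

Such families obey Kleitman's bound. The complements of the `(d + 1 - k)`-sets of `F` form an
`(n - d - 1)`-intersecting family, so by Katona's intersecting shadow theorem their shadow on level
`k`, which avoids `F`, is at least as large; hence the slices of sizes `k` and `d + 1 - k` together
have at most `n.choose k` members. For odd `d` the middle slice is intersecting and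
Erdős–Ko–Rado bounds it by `(n - 1).choose (d / 2)`. Katona's theorem itself is proved by
shifting towards an element `x` and induction on the ground set.
-/

open Finset
open scoped symmDiff

open scoped FinsetFamily

variable {α : Type*} [DecidableEq α]

def TIntersecting (t : ℕ) (𝒜 : Finset (Finset α)) : Prop :=
  ∀ A ∈ 𝒜, ∀ B ∈ 𝒜, t ≤ #(A ∩ B)

namespace TIntersecting

variable {t : ℕ} {𝒜 ℬ : Finset (Finset α)}

lemma mono (h : TIntersecting t 𝒜) (hℬ : ℬ ⊆ 𝒜) : TIntersecting t ℬ :=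
  fun A hA B hB ↦ h A (hℬ hA) B (hℬ hB)

lemma le_card (h : TIntersecting t 𝒜) {A : Finset α} (hA : A ∈ 𝒜) : t ≤ #A := by
  simpa using h A hA A hA

end TIntersecting

namespace UV

variable {x y : α} {A B : Finset α} {𝒜 : Finset (Finset α)} {t : ℕ}

lemma compress_singleton_of_notMem_of_mem (hy : y ∉ A) (hx : x ∈ A) :
    compress {y} {x} A = insert y (A.erase x) := by
  rw [compress_of_disjoint_of_le (disjoint_singleton_left.2 hy) (singleton_subset_iff.2 hx)]
  ext z
  simp only [sup_eq_union, mem_sdiff, mem_union, mem_singleton, mem_insert, mem_erase]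
  grind

lemma notMem_and_mem_of_compress_ne (h : compress {y} {x} A ≠ A) : y ∉ A ∧ x ∈ A := by
  by_contra hA
  refine h (if_neg ?_)
  rwa [disjoint_singleton_left, singleton_subset_iff]

lemma mem_or_exists_of_mem_compression (hA : A ∈ 𝓒 {y} {x} 𝒜) :
    (A ∈ 𝒜 ∧ compress {y} {x} A ∈ 𝒜) ∨
      ∃ B ∈ 𝒜, y ∉ B ∧ x ∈ B ∧ A = insert y (B.erase x) := by
  obtain hA | ⟨hA, B, hB, rfl⟩ := mem_compression.1 hA
  · exact Or.inl hA
  · have hBc : compress {y} {x} B ≠ B := fun h ↦ hA (by rwa [h])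
    obtain ⟨hy, hx⟩ := notMem_and_mem_of_compress_ne hBc
    exact Or.inr ⟨B, hB, hy, hx, compress_singleton_of_notMem_of_mem hy hx⟩

lemma subset_of_mem_compression {U : Finset α} (hy : y ∈ U) (hU : ∀ A ∈ 𝒜, A ⊆ U)
    (hA : A ∈ 𝓒 {y} {x} 𝒜) : A ⊆ U := by
  obtain ⟨hA, -⟩ | ⟨B, hB, -, -, rfl⟩ := mem_or_exists_of_mem_compression hA
  · exact hU A hA
  · exact insert_subset hy ((erase_subset _ _).trans (hU B hB))

lemma card_inter_le_card_inter_insert_erase (hxB : x ∈ B) (hyB : y ∉ B) (hA : x ∈ A → y ∈ A) :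
    #(A ∩ B) ≤ #(A ∩ insert y (B.erase x)) := by
  refine card_le_card_of_injOn (Equiv.swap x y) (fun z hz ↦ ?_) (Equiv.swap x y).injective.injOn
  obtain ⟨hzA, hzB⟩ := mem_inter.1 hz
  have hzy : z ≠ y := fun h ↦ hyB (h ▸ hzB)
  by_cases hzx : z = x
  · subst hzx
    simp [Equiv.swap_apply_left, hA hzA]
  · simp [Equiv.swap_apply_of_ne_of_ne hzx hzy, hzA, hzB, hzx]

lemma inter_insert_erase_of_notMem (hyA : y ∉ A) :
    A ∩ insert y (B.erase x) = (A ∩ B).erase x := by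
  rw [inter_insert_of_notMem hyA, inter_erase]

lemma card_insert_erase_inter_insert_erase (hx : x ∈ A ∩ B) (hy : y ∉ A) :
    #(insert y (A.erase x) ∩ insert y (B.erase x)) = #(A ∩ B) := by
  have hAB : A.erase x ∩ B.erase x = (A ∩ B).erase x := by
    rw [inter_erase, erase_inter, erase_idem]
  rw [← insert_inter_distrib, hAB, card_insert_of_notMem
    (fun h ↦ hy (mem_of_mem_inter_left (mem_of_mem_erase h))), card_erase_of_mem hx,
    Nat.sub_add_cancel (card_pos.2 ⟨x, hx⟩)]

lemma _root_.TIntersecting.compression (h : TIntersecting t 𝒜) :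
    TIntersecting t (𝓒 {y} {x} 𝒜) := by
  have kept_shifted : ∀ A ∈ 𝒜, compress {y} {x} A ∈ 𝒜 → ∀ B ∈ 𝒜, y ∉ B → x ∈ B →
      t ≤ #(A ∩ insert y (B.erase x)) := by
    intro A hA hcA B hB hyB hxB
    by_cases hA' : y ∉ A ∧ x ∈ A
    · rw [compress_singleton_of_notMem_of_mem hA'.1 hA'.2] at hcA
      rw [inter_insert_erase_of_notMem hA'.1, inter_comm A B, ← inter_insert_erase_of_notMem hyB,
        inter_comm]
      exact h _ hcA _ hB
    · exact (h A hA B hB).trans (card_inter_le_card_inter_insert_erase hxB hyB (by tauto))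
  intro A hA B hB
  obtain ⟨hA₀, hcA⟩ | ⟨A, hA₀, hyA, hxA, rfl⟩ := mem_or_exists_of_mem_compression hA <;>
    obtain ⟨hB₀, hcB⟩ | ⟨B, hB₀, hyB, hxB, rfl⟩ := mem_or_exists_of_mem_compression hB
  · exact h A hA₀ B hB₀
  · exact kept_shifted A hA₀ hcA B hB₀ hyB hxB
  · rw [inter_comm]
    exact kept_shifted B hB₀ hcB A hA₀ hyA hxA
  · rw [card_insert_erase_inter_insert_erase (mem_inter.2 ⟨hxA, hxB⟩) hyA]
    exact h A hA₀ B hB₀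

lemma shadow_iterate_compression_subset (k : ℕ) (𝒜 : Finset (Finset α)) :
    ∂^[k] (𝓒 {y} {x} 𝒜) ⊆ 𝓒 {y} {x} (∂^[k] 𝒜) := by
  induction k generalizing 𝒜 with
  | zero => exact Subset.rfl
  | succ k ih =>
    have hstep : ∂ (𝓒 {y} {x} 𝒜) ⊆ 𝓒 {y} {x} (∂ 𝒜) :=
      shadow_compression_subset_compression_shadow _ _ fun z hz ↦ ⟨x, mem_singleton_self x, by
        rw [mem_singleton.1 hz, erase_singleton, erase_singleton]; exact isCompressed_self _ _⟩
    exact (shadow_monotone.iterate k hstep).trans (ih _)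

lemma card_shadow_iterate_compression_le (k : ℕ) (𝒜 : Finset (Finset α)) :
    #(∂^[k] (𝓒 {y} {x} 𝒜)) ≤ #(∂^[k] 𝒜) :=
  (card_le_card (shadow_iterate_compression_subset k 𝒜)).trans (card_compression _ _ _).le

lemma card_filter_mem_compression_lt (hyx : y ≠ x) (h : ¬IsCompressed {y} {x} 𝒜) :
    #{A ∈ 𝓒 {y} {x} 𝒜 | x ∈ A} < #{A ∈ 𝒜 | x ∈ A} := by
  have hsub : {A ∈ 𝓒 {y} {x} 𝒜 | x ∈ A} ⊆ {A ∈ 𝒜 | x ∈ A} := by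
    intro A hA
    rw [mem_filter] at hA ⊢
    obtain ⟨hA', -⟩ | ⟨B, -, -, -, rfl⟩ := mem_or_exists_of_mem_compression hA.1
    · exact ⟨hA', hA.2⟩
    · simp [hyx.symm] at hA
  obtain ⟨B, hB, hBc⟩ := not_subset.1 fun h𝒜 ↦
    h (eq_of_subset_of_card_le h𝒜 (card_compression _ _ _).le).symm
  have hcB : compress {y} {x} B ≠ B := fun h ↦ hBc (mem_compression.2 (Or.inl ⟨hB, by rwa [h]⟩))
  refine card_lt_card ((Finset.ssubset_iff_of_subset hsub).2 ⟨B, ?_, fun hB' ↦ hBc ?_⟩)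
  · exact mem_filter.2 ⟨hB, (notMem_and_mem_of_compress_ne hcB).2⟩
  · exact (mem_filter.1 hB').1

lemma exists_isCompressed (x : α) (U : Finset α) {P : Finset (Finset α) → Prop}
    (hP : ∀ y ∈ U, ∀ ℬ, P ℬ → P (𝓒 {y} {x} ℬ)) (h𝒜 : P 𝒜) :
    ∃ ℬ, P ℬ ∧ ∀ y ∈ U, IsCompressed {y} {x} ℬ := by
  induction hm : #{A ∈ 𝒜 | x ∈ A} using Nat.strong_induction_on generalizing 𝒜 with
  | _ m ih =>
  by_cases hc : ∀ y ∈ U, IsCompressed {y} {x} 𝒜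
  · exact ⟨𝒜, h𝒜, hc⟩
  push Not at hc
  obtain ⟨y, hy, hyc⟩ := hc
  have hyx : y ≠ x := by
    rintro rfl
    exact hyc (isCompressed_self _ _)
  exact ih _ (hm ▸ card_filter_mem_compression_lt hyx hyc) (hP y hy _ h𝒜) rfl

end UV

namespace Finset

variable {𝒜 : Finset (Finset α)} {U : Finset α} {x : α} {a t k : ℕ}

lemma card_le_card_shadow_iterate_of_card_add_le (hU : ∀ A ∈ 𝒜, A ⊆ U)
    (h𝒜 : (𝒜 : Set (Finset α)).Sized a) (hta : t ≤ a) (hUa : #U + t ≤ 2 * a) :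
    #𝒜 ≤ #(∂^[t] 𝒜) := by
  -- Double count the pairs `S ⊆ A`: `#U + t ≤ 2 * a` is what makes the number of `a`-subsets of
  -- `U` above a fixed `(a - t)`-set at most `a.choose t`.
  have hsub : ∀ A ∈ 𝒜, a.choose t ≤ #((∂^[t] 𝒜).bipartiteAbove (fun A S ↦ S ⊆ A) A) := by
    intro A hA
    calc a.choose t = #(A.powersetCard (a - t)) := by
          rw [card_powersetCard, h𝒜 hA, Nat.choose_symm hta]
      _ ≤ _ := card_le_card fun S hS ↦ by
          obtain ⟨hSA, hS⟩ := mem_powersetCard.1 hS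
          refine mem_filter.2 ⟨mem_shadow_iterate_iff_exists_sdiff.2 ⟨A, hA, hSA, ?_⟩, hSA⟩
          rw [card_sdiff_of_subset hSA, hS, h𝒜 hA]
          omega
  have hsup : ∀ S ∈ ∂^[t] 𝒜, #(𝒜.bipartiteBelow (fun A S ↦ S ⊆ A) S) ≤ a.choose t := by
    intro S hS
    have hS' : #S = a - t := h𝒜.shadow_iterate hS
    obtain ⟨C, hC, hSC, -⟩ := mem_shadow_iterate_iff_exists_sdiff.1 hS
    calc #(𝒜.bipartiteBelow (fun A S ↦ S ⊆ A) S) ≤ #((U \ S).powersetCard t) := by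
          refine card_le_card_of_injOn (· \ S) (fun A hA ↦ ?_) fun A hA B hB hAB ↦ ?_
          · obtain ⟨hA, hSA⟩ := mem_filter.1 hA
            refine mem_powersetCard.2 ⟨sdiff_subset_sdiff (hU A hA) subset_rfl, ?_⟩
            rw [card_sdiff_of_subset hSA, h𝒜 hA, hS']
            omega
          · rw [← sdiff_union_of_subset (mem_filter.1 hA).2,
              ← sdiff_union_of_subset (mem_filter.1 hB).2]
            exact congrArg (· ∪ S) hAB
      _ = (#U - (a - t)).choose t := by
          rw [card_powersetCard, card_sdiff_of_subset ((hSC.trans (hU C hC))), hS']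
      _ ≤ a.choose t := Nat.choose_le_choose t (by omega)
  exact Nat.le_of_mul_le_mul_right (card_mul_le_card_mul _ hsub hsup) (Nat.choose_pos hta)

lemma shadow_iterate_nonMemberSubfamily_subset :
    ∂^[k] (𝒜.nonMemberSubfamily x) ⊆ (∂^[k] 𝒜).nonMemberSubfamily x := by
  intro S hS
  obtain ⟨C, hC, hSC, hCS⟩ := mem_shadow_iterate_iff_exists_sdiff.1 hS
  obtain ⟨hC, hxC⟩ := mem_nonMemberSubfamily.1 hC
  exact mem_nonMemberSubfamily.2
    ⟨mem_shadow_iterate_iff_exists_sdiff.2 ⟨C, hC, hSC, hCS⟩, fun h ↦ hxC (hSC h)⟩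

lemma shadow_iterate_memberSubfamily_subset :
    ∂^[k] (𝒜.memberSubfamily x) ⊆ (∂^[k] 𝒜).memberSubfamily x := by
  intro S hS
  obtain ⟨C, hC, hSC, hCS⟩ := mem_shadow_iterate_iff_exists_sdiff.1 hS
  obtain ⟨hC, hxC⟩ := mem_memberSubfamily.1 hC
  refine mem_memberSubfamily.2 ⟨mem_shadow_iterate_iff_exists_sdiff.2
    ⟨insert x C, hC, insert_subset_insert x hSC, ?_⟩, fun h ↦ hxC (hSC h)⟩
  rwa [insert_sdiff_insert, sdiff_insert_of_notMem hxC]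

lemma card_shadow_iterate_memberSubfamily_add_le :
    #(∂^[k] (𝒜.memberSubfamily x)) + #(∂^[k] (𝒜.nonMemberSubfamily x)) ≤ #(∂^[k] 𝒜) :=
  (add_le_add (card_le_card shadow_iterate_memberSubfamily_subset)
    (card_le_card shadow_iterate_nonMemberSubfamily_subset)).trans
      (card_memberSubfamily_add_card_nonMemberSubfamily _ _).le

lemma subset_of_mem_memberSubfamily {B : Finset α} (hU : ∀ A ∈ 𝒜, A ⊆ insert x U)
    (hB : B ∈ 𝒜.memberSubfamily x) : B ⊆ U := by
  obtain ⟨hB, hxB⟩ := mem_memberSubfamily.1 hB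
  exact (subset_insert_iff_of_notMem hxB).1 ((subset_insert x B).trans (hU _ hB))

lemma subset_of_mem_nonMemberSubfamily {B : Finset α} (hU : ∀ A ∈ 𝒜, A ⊆ insert x U)
    (hB : B ∈ 𝒜.nonMemberSubfamily x) : B ⊆ U := by
  obtain ⟨hB, hxB⟩ := mem_nonMemberSubfamily.1 hB
  exact (subset_insert_iff_of_notMem hxB).1 (hU _ hB)

lemma _root_.Set.Sized.memberSubfamily (h𝒜 : (𝒜 : Set (Finset α)).Sized a) :
    (𝒜.memberSubfamily x : Set (Finset α)).Sized (a - 1) := by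
  intro B hB
  obtain ⟨hB, hxB⟩ := mem_memberSubfamily.1 hB
  have := h𝒜 hB
  rw [card_insert_of_notMem hxB] at this
  omega

lemma _root_.Set.Sized.nonMemberSubfamily (h𝒜 : (𝒜 : Set (Finset α)).Sized a) :
    (𝒜.nonMemberSubfamily x : Set (Finset α)).Sized a :=
  fun _ hB ↦ h𝒜 (mem_nonMemberSubfamily.1 hB).1

end Finset

namespace TIntersecting

open UV

variable {𝒜 : Finset (Finset α)} {U : Finset α} {x : α} {a t : ℕ}

lemma exists_shifted (h : TIntersecting t 𝒜) (h𝒜 : (𝒜 : Set (Finset α)).Sized a)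
    (hU : ∀ A ∈ 𝒜, A ⊆ insert x U) :
    ∃ ℬ : Finset (Finset α), #ℬ = #𝒜 ∧ (∀ k, #(∂^[k] ℬ) ≤ #(∂^[k] 𝒜)) ∧
      (∀ B ∈ ℬ, B ⊆ insert x U) ∧ (ℬ : Set (Finset α)).Sized a ∧ TIntersecting t ℬ ∧
      ∀ y ∈ U, IsCompressed {y} {x} ℬ := by
  obtain ⟨ℬ, ⟨hcard, hshadow, hℬU, hℬ, hint⟩, hcomp⟩ := exists_isCompressed x U
    (P := fun ℬ ↦ #ℬ = #𝒜 ∧ (∀ k, #(∂^[k] ℬ) ≤ #(∂^[k] 𝒜)) ∧ (∀ B ∈ ℬ, B ⊆ insert x U) ∧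
      (ℬ : Set (Finset α)).Sized a ∧ TIntersecting t ℬ)
    (fun y hy ℬ ⟨hcard, hshadow, hℬU, hℬ, hint⟩ ↦
      ⟨(card_compression _ _ _).trans hcard,
        fun k ↦ (card_shadow_iterate_compression_le k ℬ).trans (hshadow k),
        fun B ↦ subset_of_mem_compression (mem_insert_of_mem hy) hℬU,
        hℬ.uvCompression (by simp), hint.compression⟩)
    ⟨rfl, fun _ ↦ le_rfl, hU, h𝒜, h⟩
  exact ⟨ℬ, hcard, hshadow, hℬU, hℬ, hint, hcomp⟩

/-- Were two sets through `x` to share only `t` points, their union would miss some `y ∈ U`, and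
shifting one of them from `x` to `y` would leave only `t - 1` common points. -/
lemma memberSubfamily_of_isCompressed (h : TIntersecting t 𝒜)
    (h𝒜 : (𝒜 : Set (Finset α)).Sized a) (hcomp : ∀ y ∈ U, IsCompressed {y} {x} 𝒜)
    (hUa : 2 * a < #(insert x U) + t) :
    TIntersecting t (𝒜.memberSubfamily x) := by
  intro A hA B hB
  obtain ⟨hA, hxA⟩ := mem_memberSubfamily.1 hA
  obtain ⟨hB, hxB⟩ := mem_memberSubfamily.1 hB
  by_contra! hlt
  have hinter : #(insert x A ∩ insert x B) = #(A ∩ B) + 1 := by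
    rw [← insert_inter_distrib, card_insert_of_notMem fun h ↦ hxA (mem_inter.1 h).1]
  have hunion := card_union_add_card_inter (insert x A) (insert x B)
  have := h _ hA _ hB
  rw [h𝒜 hA, h𝒜 hB] at hunion
  obtain ⟨y, hyU, hyAB⟩ := exists_mem_notMem_of_card_lt_card (s := insert x A ∪ insert x B)
    (t := insert x U) (by omega)
  obtain ⟨hyA, hyB⟩ := notMem_union.1 hyAB
  have hyU : y ∈ U := (mem_insert.1 hyU).resolve_left fun h ↦ hyA (h ▸ mem_insert_self _ _)
  have hB' : insert y B ∈ 𝒜 := by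
    have := compress_mem_compression (u := {y}) (v := {x}) hB
    rwa [hcomp y hyU, compress_singleton_of_notMem_of_mem hyB (mem_insert_self _ _),
      erase_insert hxB] at this
  have := h _ hA _ hB'
  rw [inter_insert_of_notMem hyA, insert_inter_of_notMem hxB] at this
  omega

/-- **Katona's intersecting shadow theorem**. -/
theorem card_le_card_shadow_iterate (h : TIntersecting t 𝒜)
    (h𝒜 : (𝒜 : Set (Finset α)).Sized a) : #𝒜 ≤ #(∂^[t] 𝒜) := by
  suffices key : ∀ U : Finset α, ∀ {a t : ℕ} {𝒜 : Finset (Finset α)}, (∀ A ∈ 𝒜, A ⊆ U) →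
      (𝒜 : Set (Finset α)).Sized a → TIntersecting t 𝒜 → #𝒜 ≤ #(∂^[t] 𝒜) from
    key _ (fun A hA ↦ le_sup (f := id) hA) h𝒜 h
  intro U
  induction U using Finset.induction_on with
  | empty =>
    intro a t 𝒜 hU _ h
    obtain rfl | ⟨A, hA⟩ := 𝒜.eq_empty_or_nonempty
    · simp
    obtain rfl : t = 0 := by simpa [subset_empty.1 (hU A hA)] using h.le_card hA
    exact le_rfl
  | insert x U _ ih =>
    intro a t 𝒜 hU h𝒜 h
    obtain rfl | ⟨A, hA⟩ := 𝒜.eq_empty_or_nonempty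
    · simp
    by_cases hbase : #(insert x U) + t ≤ 2 * a
    · exact card_le_card_shadow_iterate_of_card_add_le hU h𝒜 (h𝒜 hA ▸ h.le_card hA) hbase
    obtain ⟨ℬ, hcard, hshadow, hℬU, hℬ, hint, hcomp⟩ := h.exists_shifted h𝒜 hU
    calc #𝒜 = #(ℬ.memberSubfamily x) + #(ℬ.nonMemberSubfamily x) :=
          hcard ▸ (card_memberSubfamily_add_card_nonMemberSubfamily x ℬ).symm
      _ ≤ #(∂^[t] (ℬ.memberSubfamily x)) + #(∂^[t] (ℬ.nonMemberSubfamily x)) := add_le_add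
          (ih (fun _ ↦ subset_of_mem_memberSubfamily hℬU) hℬ.memberSubfamily
            (hint.memberSubfamily_of_isCompressed hℬ hcomp (by omega)))
          (ih (fun _ ↦ subset_of_mem_nonMemberSubfamily hℬU) hℬ.nonMemberSubfamily
            (hint.mono (filter_subset _ _)))
      _ ≤ #(∂^[t] ℬ) := card_shadow_iterate_memberSubfamily_add_le
      _ ≤ #(∂^[t] 𝒜) := hshadow t

end TIntersecting

theorem Nat.sum_range_choose_succ_add_choose (m t : ℕ) :
    ∑ k ∈ range (t + 1), (m + 1).choose k + m.choose t = 2 * ∑ k ∈ range (t + 1), m.choose k := by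
  induction t with
  | zero => simp
  | succ t ih =>
    rw [sum_range_succ, sum_range_succ (fun k ↦ m.choose k), Nat.choose_succ_succ' m t]
    omega

theorem Finset.sum_range_add_two_eq_sum_pairs {M : Type*} [AddCommMonoid M] (f : ℕ → M) (d : ℕ) :
    ∑ k ∈ range (d + 2), f k =
      ∑ k ∈ range (d / 2 + 1), (f k + f (d + 1 - k)) + ∑ k ∈ range (d % 2), f (d / 2 + 1 + k) := by
  have hreflect : ∑ k ∈ range (d / 2 + 1), f (d / 2 + 1 + (d % 2 + k)) =
      ∑ k ∈ range (d / 2 + 1), f (d + 1 - k) := by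
    rw [← sum_range_reflect]
    refine sum_congr rfl fun k hk ↦ ?_
    rw [mem_range] at hk
    congr 1
    omega
  rw [show d + 2 = (d / 2 + 1) + (d % 2 + (d / 2 + 1)) by omega, sum_range_add f,
    sum_range_add (fun k ↦ f (d / 2 + 1 + k)), hreflect, sum_add_distrib]
  abel

section UnionBounded

variable [Fintype α] {𝒜 : Finset (Finset α)} {d k s : ℕ}

lemma card_slice_add_card_slice_le (h : ∀ A ∈ 𝒜, ∀ B ∈ 𝒜, #(A ∪ B) ≤ d)
    (hdn : d < Fintype.card α) (hks : k + s = d + 1) :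
    #(𝒜 # k) + #(𝒜 # s) ≤ (Fintype.card α).choose k := by
  set n := Fintype.card α
  set 𝒞 := (𝒜 # s)ᶜˢ
  have h𝒞 : (𝒞 : Set (Finset α)).Sized (n - s) := sized_slice.compls
  have hint : TIntersecting (n - (d + 1)) 𝒞 := by
    intro A hA B hB
    have hAB := h _ (mem_slice.1 (mem_compls.1 hA)).1 _ (mem_slice.1 (mem_compls.1 hB)).1
    rw [← compl_inter, card_compl] at hAB
    have := card_le_univ (A ∩ B)
    omega
  have hshadow : ∀ S ∈ ∂^[n - (d + 1)] 𝒞, #S = k ∧ S ∉ 𝒜 # k := by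
    intro S hS
    have hSk : #S = k := by
      rw [h𝒞.shadow_iterate hS]
      omega
    refine ⟨hSk, fun hS𝒜 ↦ ?_⟩
    obtain ⟨C, hC, hSC, -⟩ := mem_shadow_iterate_iff_exists_sdiff.1 hS
    obtain ⟨hC𝒜, hCs⟩ := mem_slice.1 (mem_compls.1 hC)
    have := h _ (mem_slice.1 hS𝒜).1 _ hC𝒜
    rw [card_union_of_disjoint (disjoint_compl_right.mono_left hSC), hSk, hCs] at this
    omega
  calc #(𝒜 # k) + #(𝒜 # s) = #(𝒜 # k) + #𝒞 := by rw [card_compls]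
    _ ≤ #(𝒜 # k) + #(∂^[n - (d + 1)] 𝒞) :=
        add_le_add le_rfl (hint.card_le_card_shadow_iterate h𝒞)
    _ = #(𝒜 # k ∪ ∂^[n - (d + 1)] 𝒞) :=
        (card_union_of_disjoint (disjoint_right.2 fun S hS ↦ (hshadow S hS).2)).symm
    _ ≤ #(univ.powersetCard k) := card_le_card <| union_subset
        (fun S hS ↦ mem_powersetCard.2 ⟨subset_univ S, (mem_slice.1 hS).2⟩)
        (fun S hS ↦ mem_powersetCard.2 ⟨subset_univ S, (hshadow S hS).1⟩)
    _ = n.choose k := by rw [card_powersetCard, card_univ]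

lemma card_le_sum_choose_add_sum_card_slice (h : ∀ A ∈ 𝒜, ∀ B ∈ 𝒜, #(A ∪ B) ≤ d)
    (hdn : d < Fintype.card α) :
    #𝒜 ≤ ∑ k ∈ range (d / 2 + 1), (Fintype.card α).choose k +
      ∑ k ∈ range (d % 2), #(𝒜 # (d / 2 + 1 + k)) := by
  have hsize : ∀ A ∈ 𝒜, #A ∈ range (d + 2) := fun A hA ↦ by
    have := h A hA A hA
    rw [union_self] at this
    exact mem_range.2 (by omega)
  calc #𝒜 = ∑ k ∈ range (d + 2), #(𝒜 # k) := card_eq_sum_card_fiberwise hsize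
    _ = _ := sum_range_add_two_eq_sum_pairs _ d
    _ ≤ _ := by
        gcongr with k hk
        exact card_slice_add_card_slice_le h hdn (by rw [mem_range] at hk; omega)

/-- **Kleitman's theorem**, even case. -/
theorem card_le_sum_choose_of_even (hd : Even d) (h : ∀ A ∈ 𝒜, ∀ B ∈ 𝒜, #(A ∪ B) ≤ d)
    (hdn : d < Fintype.card α) :
    #𝒜 ≤ ∑ k ∈ range (d / 2 + 1), (Fintype.card α).choose k := by
  simpa [Nat.even_iff.1 hd] using card_le_sum_choose_add_sum_card_slice h hdn

end UnionBounded

/-- **Kleitman's theorem**, odd case. -/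
theorem card_le_two_mul_sum_choose_of_odd {n d : ℕ} {𝒜 : Finset (Finset (Fin n))} (hd : Odd d)
    (h : ∀ A ∈ 𝒜, ∀ B ∈ 𝒜, #(A ∪ B) ≤ d) (hdn : d < n) :
    #𝒜 ≤ 2 * ∑ k ∈ range (d / 2 + 1), (n - 1).choose k := by
  have hmid : #(𝒜 # (d / 2 + 1)) ≤ (n - 1).choose (d / 2) := by
    have hint : ((𝒜 # (d / 2 + 1) : Finset _) : Set (Finset (Fin n))).Intersecting := by
      intro A hA B hB hAB
      have := h A (mem_slice.1 hA).1 B (mem_slice.1 hB).1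
      rw [card_union_of_disjoint hAB, (mem_slice.1 hA).2, (mem_slice.1 hB).2] at this
      omega
    have hd2 := Nat.odd_iff.1 hd
    simpa using erdos_ko_rado hint sized_slice (by omega)
  have := card_le_sum_choose_add_sum_card_slice h (by simpa using hdn)
  rw [Nat.odd_iff.1 hd, Fintype.card_fin] at this
  have hpascal := Nat.sum_range_choose_succ_add_choose (n - 1) (d / 2)
  rw [Nat.sub_add_cancel (by omega)] at hpascal
  rw [← hpascal]
  simpa using this.trans (add_le_add le_rfl hmid)

lemma Finset.symmDiff_singleton_of_mem {a : α} {s : Finset α} (ha : a ∈ s) :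
    s ∆ {a} = s.erase a := by
  ext b
  by_cases hb : b = a <;> simp [mem_symmDiff, hb, ha]

lemma Finset.symmDiff_singleton_of_notMem {a : α} {s : Finset α} (ha : a ∉ s) :
    s ∆ {a} = insert a s := by
  ext b
  by_cases hb : b = a <;> simp [mem_symmDiff, hb, ha]

lemma Finset.isLowerSet_of_forall_erase_mem {𝒜 : Finset (Finset α)}
    (h : ∀ s ∈ 𝒜, ∀ a, s.erase a ∈ 𝒜) : IsLowerSet (𝒜 : Set (Finset α)) := by
  intro s t hts hs
  have hsdiff : ∀ u : Finset α, s \ u ∈ 𝒜 := fun u ↦ by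
    induction u using Finset.induction_on with
    | empty => simpa using hs
    | insert a u _ ih => exact sdiff_insert s u a ▸ h _ ih a
  simpa [sdiff_sdiff_eq_self hts] using hsdiff (s \ t)

namespace Down

variable {𝒜 : Finset (Finset α)} {a b : α} {s : Finset α}

lemma mem_compression_iff_of_mem (ha : a ∈ s) : s ∈ 𝓓 a 𝒜 ↔ s ∈ 𝒜 ∧ s ∆ {a} ∈ 𝒜 := by
  rw [mem_compression, insert_eq_self.2 ha, symmDiff_singleton_of_mem ha]
  tauto

lemma mem_compression_iff_of_notMem (ha : a ∉ s) : s ∈ 𝓓 a 𝒜 ↔ s ∈ 𝒜 ∨ s ∆ {a} ∈ 𝒜 := by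
  rw [mem_compression, erase_eq_of_notMem ha, symmDiff_singleton_of_notMem ha]
  tauto

lemma erase_mem_compression_of_forall_erase_mem (h : ∀ s ∈ 𝒜, s.erase b ∈ 𝒜)
    (hs : s ∈ 𝓓 a 𝒜) : s.erase b ∈ 𝓓 a 𝒜 := by
  obtain ⟨hs, hsa⟩ | ⟨hs, has⟩ := mem_compression.1 hs
  · exact mem_compression.2 (Or.inl ⟨h s hs, erase_right_comm (s := s) ▸ h _ hsa⟩)
  have ha : a ∉ s := fun ha ↦ hs (insert_eq_self.2 ha ▸ has)
  obtain rfl | hab := eq_or_ne a b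
  · rw [erase_eq_of_notMem ha]
    exact mem_compression.2 (Or.inr ⟨hs, has⟩)
  by_cases hsb : s.erase b ∈ 𝒜
  · have hasb : a ∉ s.erase b := fun h ↦ ha (mem_of_mem_erase h)
    exact mem_compression.2 (Or.inl ⟨hsb, by rwa [erase_eq_of_notMem hasb]⟩)
  · exact mem_compression.2 (Or.inr ⟨hsb, erase_insert_of_ne hab ▸ h _ has⟩)

/-- One down-compression in every coordinate turns a family into a lower set. -/
lemma exists_isLowerSet [Fintype α] {P : Finset (Finset α) → Prop}
    (hP : ∀ a ℬ, P ℬ → P (𝓓 a ℬ)) (h𝒜 : P 𝒜) :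
    ∃ ℬ : Finset (Finset α), IsLowerSet (ℬ : Set (Finset α)) ∧ #ℬ = #𝒜 ∧ P ℬ := by
  have key : ∀ u : Finset α, ∃ ℬ : Finset (Finset α),
      #ℬ = #𝒜 ∧ P ℬ ∧ ∀ b ∈ u, ∀ s ∈ ℬ, s.erase b ∈ ℬ := by
    intro u
    induction u using Finset.induction_on with
    | empty => exact ⟨𝒜, rfl, h𝒜, by simp⟩
    | insert a u _ ih =>
      obtain ⟨ℬ, hcard, hℬP, hℬ⟩ := ih
      refine ⟨𝓓 a ℬ, (card_compression a ℬ).trans hcard, hP a ℬ hℬP, fun b hb s hs ↦ ?_⟩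
      obtain rfl | hb := mem_insert.1 hb
      · exact erase_mem_compression_of_mem_compression hs
      · exact erase_mem_compression_of_forall_erase_mem (hℬ b hb) hs
  obtain ⟨ℬ, hcard, hℬP, hℬ⟩ := key univ
  exact ⟨ℬ, isLowerSet_of_forall_erase_mem fun s hs b ↦ hℬ b (mem_univ b) s hs, hcard, hℬP⟩

end Down

section DifferenceFamily

variable {n : ℕ} {F : Finset (Finset (Fin n))} {M A B : Finset (Fin n)}

lemma shattersFam_iff_shatters : ShattersFam F M ↔ F.Shatters M := by
  simp only [ShattersFam, Finset.Shatters, inter_comm M]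

lemma symmDiff_mem_symmDiffFam (hA : A ∈ F) (hB : B ∈ F) : A ∆ B ∈ symmDiffFam F :=
  mem_image₂_of_mem hA hB

lemma symmDiff_mem_compression_symmDiffFam {i : Fin n} (hiA : i ∈ A) (hiB : i ∉ B)
    (hA : A ∈ 𝓓 i F) (hB : B ∈ 𝓓 i F) : A ∆ B ∈ 𝓓 i (symmDiffFam F) := by
  obtain ⟨hA, hA'⟩ := (Down.mem_compression_iff_of_mem hiA).1 hA
  rw [Down.mem_compression_iff_of_mem (by simp [mem_symmDiff, hiA, hiB]), symmDiff_right_comm]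
  obtain hB | hB' := (Down.mem_compression_iff_of_notMem hiB).1 hB
  · exact ⟨symmDiff_mem_symmDiffFam hA hB, symmDiff_mem_symmDiffFam hA' hB⟩
  · refine ⟨?_, ?_⟩
    · have := symmDiff_mem_symmDiffFam hA' hB'
      rwa [symmDiff_symmDiff_symmDiff_comm, symmDiff_self, symmDiff_bot] at this
    · have := symmDiff_mem_symmDiffFam hA hB'
      rwa [← symmDiff_assoc, symmDiff_right_comm] at this

lemma symmDiffFam_compression_subset (i : Fin n) (F : Finset (Finset (Fin n))) :
    symmDiffFam (𝓓 i F) ⊆ 𝓓 i (symmDiffFam F) := by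
  intro X hX
  obtain ⟨A, hA, B, hB, rfl⟩ := mem_image₂.1 hX
  by_cases hiA : i ∈ A <;> by_cases hiB : i ∈ B
  · rw [Down.mem_compression_iff_of_notMem (by simp [mem_symmDiff, hiA, hiB])]
    exact Or.inl (symmDiff_mem_symmDiffFam ((Down.mem_compression_iff_of_mem hiA).1 hA).1
      ((Down.mem_compression_iff_of_mem hiB).1 hB).1)
  · exact symmDiff_mem_compression_symmDiffFam hiA hiB hA hB
  · exact symmDiff_comm A B ▸ symmDiff_mem_compression_symmDiffFam hiB hiA hB hA
  rw [Down.mem_compression_iff_of_notMem (by simp [mem_symmDiff, hiA, hiB])]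
  obtain hA | hA' := (Down.mem_compression_iff_of_notMem hiA).1 hA <;>
    obtain hB | hB' := (Down.mem_compression_iff_of_notMem hiB).1 hB
  · exact Or.inl (symmDiff_mem_symmDiffFam hA hB)
  · exact Or.inr (symmDiff_assoc A B {i} ▸ symmDiff_mem_symmDiffFam hA hB')
  · exact Or.inr (symmDiff_right_comm A {i} B ▸ symmDiff_mem_symmDiffFam hA' hB)
  · left
    have := symmDiff_mem_symmDiffFam hA' hB'
    rwa [symmDiff_symmDiff_symmDiff_comm, symmDiff_self, symmDiff_bot] at this

lemma ShattersFam.of_compression {i : Fin n} (h : ShattersFam (symmDiffFam (𝓓 i F)) M) :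
    ShattersFam (symmDiffFam F) M :=
  shattersFam_iff_shatters.2 <|
    ((shattersFam_iff_shatters.1 h).mono_left (symmDiffFam_compression_subset i F)).of_compression

lemma IsLowerSet.shattersFam_symmDiffFam_union (hF : IsLowerSet (F : Set (Finset (Fin n))))
    (hA : A ∈ F) (hB : B ∈ F) : ShattersFam (symmDiffFam F) (A ∪ B) := by
  intro S hS
  refine ⟨(S ∩ A) ∆ (S \ A), symmDiff_mem_symmDiffFam (hF inter_subset_right hA)
    (hF (fun x hx ↦ ?_) hB), ?_⟩
  · obtain ⟨hxS, hxA⟩ := mem_sdiff.1 hx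
    exact (mem_union.1 (hS hxS)).resolve_left hxA
  · rw [(disjoint_sdiff_inter S A).symm.symmDiff_eq_sup, ← inf_eq_inter (s := S), sup_inf_sdiff,
      inter_eq_left.2 hS]

end DifferenceFamily

theorem cambie_girao_kang_general {n d r : ℕ} (hdn : d < n)
    (hr : r = 0 ∨ r = 1) (hmod : d % 2 = r % 2)
    (F : Finset (Finset (Fin n)))
    (hVC : ∀ M : Finset (Fin n), ShattersFam (symmDiffFam F) M → M.card ≤ d) :
    F.card ≤ 2 ^ r * ∑ k ∈ Finset.range (d / 2 + 1), (n - r).choose k := by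
  obtain ⟨G, hG, hcard, hGVC⟩ := Down.exists_isLowerSet
    (P := fun G ↦ ∀ M, ShattersFam (symmDiffFam G) M → #M ≤ d)
    (fun _ _ hVC M hM ↦ hVC M hM.of_compression) hVC
  have hunion : ∀ A ∈ G, ∀ B ∈ G, #(A ∪ B) ≤ d :=
    fun A hA B hB ↦ hGVC _ (hG.shattersFam_symmDiffFam_union hA hB)
  rw [← hcard]
  rcases hr with rfl | rfl
  · simpa using card_le_sum_choose_of_even (Nat.even_iff.2 hmod) hunion (by simpa using hdn)
  · simpa using card_le_two_mul_sum_choose_of_odd (Nat.odd_iff.2 hmod) hunion hdn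

theorem cambie_girao_kang {n d r : ℕ} (hd : 0 < d) (hdn : d < n)
    (hr : r = 0 ∨ r = 1) (hmod : d % 2 = r % 2)
    (F : Finset (Finset (Fin n)))
    (hVC : ∀ M : Finset (Fin n), ShattersFam (symmDiffFam F) M → M.card ≤ d) :
    F.card ≤ 2 ^ r * ∑ k ∈ Finset.range (d / 2 + 1), (n - r).choose k :=
  cambie_girao_kang_general hdn hr hmod F hVC
end

section
/- Let d < n be positive integers with d ≡ r (mod 2), r ∈ {0,1}. Let F be a family of subsets of [n] such that every symmetric difference A Δ B of two members of F has size at most d. Then |F| ≤ 2^r · ∑_{k=0}^{⌊d/2⌋} C(n−r, k). -/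
/-!
Down-compressions preserve the diameter, so we may take `F` to be a lower set; then
`|A ∪ B| = |(A \ B) ∆ B| ≤ d` for all `A, B ∈ F`. For `ℓ ≤ d + 1`, the complements of the
members of `F` of size `d + 1 - ℓ` form an `(n - d - 1)`-intersecting family, so by Katona's
intersecting shadow theorem at least as many `ℓ`-sets are disjoint from one of those members as
there are such members, and none of these `ℓ`-sets lies in `F`. Hence the levels `ℓ` and
`d + 1 - ℓ` of `F` have at most `C(n, ℓ)` members together, and summing over `ℓ ≤ d / 2` gives the
bound for even `d`. For odd `d` the middle level `(d + 1) / 2` is intersecting and Erdős–Ko–Rado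
bounds it by `C(n - 1, d / 2)`.

Katona's theorem is proved by induction on the ground set. Once the family is stable under
replacing an element `a` by any other point, the sets through `a`, with `a` removed, still form a
`t`-intersecting family unless the ground set has at most `2k - t` points, a case settled by
double counting.
-/

open Finset
open scoped symmDiff FinsetFamily

namespace Nat

lemma two_mul_sum_range_choose (m t : ℕ) :
    2 * ∑ k ∈ range (t + 1), m.choose k = ∑ k ∈ range (t + 1), (m + 1).choose k + m.choose t := by
  induction t with
  | zero => simp
  | succ t ih =>
    rw [sum_range_succ, sum_range_succ (fun k ↦ (m + 1).choose k), Nat.mul_add, ih,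
      Nat.choose_succ_succ]
    ring

end Nat

namespace Finset

variable {α : Type*} [DecidableEq α]

section DownCompression

variable {𝒜 : Finset (Finset α)} {a b : α} {d : ℕ}

lemma symmDiff_subset_erase_symmDiff_insert {A B : Finset α} (hB : a ∉ B) :
    A ∆ B ⊆ A.erase a ∆ insert a B := by
  intro x
  by_cases hx : x = a <;> simp_all [mem_symmDiff]

lemma symmDiff_subset_insert_symmDiff_insert {A B : Finset α} (hA : a ∉ A) (hB : a ∉ B) :
    A ∆ B ⊆ insert a A ∆ insert a B := by
  intro x
  by_cases hx : x = a <;> simp_all [mem_symmDiff]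

lemma card_symmDiff_le_of_mem_compression (h𝒜 : ∀ A ∈ 𝒜, ∀ B ∈ 𝒜, #(A ∆ B) ≤ d) :
    ∀ A ∈ 𝓓 a 𝒜, ∀ B ∈ 𝓓 a 𝒜, #(A ∆ B) ≤ d := by
  have notMem : ∀ B ∉ 𝒜, insert a B ∈ 𝒜 → a ∉ B := fun B hB hB' haB ↦
    hB (insert_eq_of_mem haB ▸ hB')
  have mixed : ∀ A, A.erase a ∈ 𝒜 → ∀ B ∉ 𝒜, insert a B ∈ 𝒜 → #(A ∆ B) ≤ d :=
    fun A hA B hB hB' ↦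
      (card_le_card (symmDiff_subset_erase_symmDiff_insert (notMem B hB hB'))).trans
        (h𝒜 _ hA _ hB')
  intro A hA B hB
  rw [Down.mem_compression] at hA hB
  rcases hA with ⟨hA, hAa⟩ | ⟨hA, hAa⟩ <;> rcases hB with ⟨hB, hBa⟩ | ⟨hB, hBa⟩
  · exact h𝒜 A hA B hB
  · exact mixed A hAa B hB hBa
  · exact symmDiff_comm A B ▸ mixed B hBa A hA hAa
  · exact (card_le_card (symmDiff_subset_insert_symmDiff_insert (notMem A hA hAa)
      (notMem B hB hBa))).trans (h𝒜 _ hAa _ hBa)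

lemma erase_mem_compression_of_forall_erase_mem (hab : a ≠ b) (h𝒜 : ∀ A ∈ 𝒜, A.erase b ∈ 𝒜)
    {A : Finset α} (hA : A ∈ 𝓓 a 𝒜) : A.erase b ∈ 𝓓 a 𝒜 := by
  rw [Down.mem_compression] at hA ⊢
  rcases hA with ⟨hA, hAa⟩ | ⟨hA, hAa⟩
  · exact .inl ⟨h𝒜 A hA, by rw [erase_right_comm]; exact h𝒜 _ hAa⟩
  · have haA : a ∉ A := fun h ↦ hA (insert_eq_of_mem h ▸ hAa)
    by_cases hAb : A.erase b ∈ 𝒜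
    · exact .inl ⟨hAb, by rwa [erase_eq_of_notMem fun h ↦ haA (mem_of_mem_erase h)]⟩
    · exact .inr ⟨hAb, erase_insert_of_ne hab ▸ h𝒜 _ hAa⟩

lemma isLowerSet_of_forall_erase_mem_s2 (h𝒜 : ∀ A ∈ 𝒜, ∀ a, A.erase a ∈ 𝒜) :
    IsLowerSet (𝒜 : Set (Finset α)) := by
  have sdiff_mem (A : Finset α) (hA : A ∈ 𝒜) (C : Finset α) : A \ C ∈ 𝒜 := by
    induction C using Finset.induction_on with
    | empty => simpa
    | insert c C _ ih => rw [sdiff_insert]; exact h𝒜 _ ih c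
  intro A B hBA hA
  rw [← sdiff_sdiff_eq_self hBA]
  exact sdiff_mem A hA _

theorem exists_isLowerSet_card_eq [Fintype α] (h𝒜 : ∀ A ∈ 𝒜, ∀ B ∈ 𝒜, #(A ∆ B) ≤ d) :
    ∃ ℬ : Finset (Finset α), #ℬ = #𝒜 ∧ (∀ A ∈ ℬ, ∀ B ∈ ℬ, #(A ∆ B) ≤ d) ∧
      IsLowerSet (ℬ : Set (Finset α)) := by
  suffices ∀ s : Finset α, ∃ ℬ : Finset (Finset α), #ℬ = #𝒜 ∧
      (∀ A ∈ ℬ, ∀ B ∈ ℬ, #(A ∆ B) ≤ d) ∧ ∀ b ∈ s, ∀ A ∈ ℬ, A.erase b ∈ ℬ by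
    obtain ⟨ℬ, hcard, hℬ, herase⟩ := this univ
    exact ⟨ℬ, hcard, hℬ, isLowerSet_of_forall_erase_mem_s2 fun A hA b ↦ herase b (mem_univ b) A hA⟩
  intro s
  induction s using Finset.induction_on with
  | empty => exact ⟨𝒜, rfl, h𝒜, by simp⟩
  | insert a s has ih =>
    obtain ⟨ℬ, hcard, hℬ, herase⟩ := ih
    refine ⟨𝓓 a ℬ, (Down.card_compression a ℬ).trans hcard,
      card_symmDiff_le_of_mem_compression hℬ, ?_⟩
    rintro b hb A hA
    rcases mem_insert.1 hb with rfl | hb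
    · exact Down.erase_mem_compression_of_mem_compression hA
    · exact erase_mem_compression_of_forall_erase_mem (ne_of_mem_of_not_mem hb has).symm
        (herase b hb) hA

lemma card_union_le_of_isLowerSet (hlower : IsLowerSet (𝒜 : Set (Finset α)))
    (h𝒜 : ∀ A ∈ 𝒜, ∀ B ∈ 𝒜, #(A ∆ B) ≤ d) : ∀ A ∈ 𝒜, ∀ B ∈ 𝒜, #(A ∪ B) ≤ d := by
  intro A hA B hB
  simpa only [sdiff_symmDiff_eq_sup, sup_eq_union] using
    h𝒜 _ (hlower (sdiff_subset (t := B)) hA) _ hB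

end DownCompression

section Katona

variable {𝒜 : Finset (Finset α)} {A B : Finset α} {a x : α} {t : ℕ}

lemma compress_singleton_of_notMem_of_mem (hx : x ∉ A) (ha : a ∈ A) :
    UV.compress {x} {a} A = insert x (A.erase a) := by
  rw [UV.compress_of_disjoint_of_le (disjoint_singleton_left.2 hx) (singleton_subset_iff.2 ha)]
  grind

lemma compress_singleton_eq_self (h : ¬(x ∉ A ∧ a ∈ A)) :
    UV.compress {x} {a} A = A := by
  rw [UV.compress, if_neg]
  simpa only [disjoint_singleton_left, singleton_subset_iff] using h

lemma card_inter_le_card_insert_erase_inter (hxA : x ∉ A) (haA : a ∈ A) (hB : a ∈ B → x ∈ B) :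
    #(A ∩ B) ≤ #(insert x (A.erase a) ∩ B) := by
  by_cases haB : a ∈ B
  · calc #(A ∩ B) = #(insert x ((A ∩ B).erase a)) := by
          rw [card_insert_of_notMem (by simp [hxA]), card_erase_add_one (mem_inter.2 ⟨haA, haB⟩)]
      _ ≤ #(insert x (A.erase a) ∩ B) := card_le_card fun z ↦ by
          simp only [mem_insert, mem_erase, mem_inter]
          rintro (rfl | ⟨hza, hzA, hzB⟩)
          · exact ⟨.inl rfl, hB haB⟩
          · exact ⟨.inr ⟨hza, hzA⟩, hzB⟩
  · refine card_le_card fun z ↦ ?_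
    simp only [mem_insert, mem_erase, mem_inter]
    rintro ⟨hzA, hzB⟩
    exact ⟨.inr ⟨fun hza ↦ haB (hza ▸ hzB), hzA⟩, hzB⟩

lemma insert_erase_inter_eq_inter_insert_erase (hxA : x ∉ A) (hxB : x ∉ B) :
    insert x (A.erase a) ∩ B = A ∩ insert x (B.erase a) := by
  grind

lemma card_inter_le_card_compress_inter_compress (A B : Finset α) :
    #(A ∩ B) ≤ #(UV.compress {x} {a} A ∩ UV.compress {x} {a} B) := by
  by_cases hA : x ∉ A ∧ a ∈ A <;> by_cases hB : x ∉ B ∧ a ∈ B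
  · rw [compress_singleton_of_notMem_of_mem hA.1 hA.2,
      compress_singleton_of_notMem_of_mem hB.1 hB.2, ← insert_inter_distrib, erase_inter,
      inter_erase, erase_idem,
      card_insert_of_notMem (by simp [hA.1]), card_erase_add_one (mem_inter.2 ⟨hA.2, hB.2⟩)]
  · rw [compress_singleton_of_notMem_of_mem hA.1 hA.2, compress_singleton_eq_self hB]
    exact card_inter_le_card_insert_erase_inter hA.1 hA.2 (by tauto)
  · rw [compress_singleton_eq_self hA, compress_singleton_of_notMem_of_mem hB.1 hB.2,
      inter_comm, inter_comm A]
    exact card_inter_le_card_insert_erase_inter hB.1 hB.2 (by tauto)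
  · rw [compress_singleton_eq_self hA, compress_singleton_eq_self hB]

lemma le_card_inter_of_mem_compression (h𝒜 : ∀ A ∈ 𝒜, ∀ B ∈ 𝒜, t ≤ #(A ∩ B)) :
    ∀ A ∈ 𝓒 {x} {a} 𝒜, ∀ B ∈ 𝓒 {x} {a} 𝒜, t ≤ #(A ∩ B) := by
  have mixed : ∀ A ∈ 𝒜, UV.compress {x} {a} A ∉ 𝒜 → ∀ B ∈ 𝒜, UV.compress {x} {a} B ∈ 𝒜 →
      t ≤ #(UV.compress {x} {a} A ∩ B) := by
    intro A hA hSA B hB hSB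
    by_cases hB' : x ∉ B ∧ a ∈ B
    · have hA' : x ∉ A ∧ a ∈ A := by
        by_contra h
        rw [compress_singleton_eq_self h] at hSA
        exact hSA hA
      rw [compress_singleton_of_notMem_of_mem hA'.1 hA'.2,
        insert_erase_inter_eq_inter_insert_erase hA'.1 hB'.1,
        ← compress_singleton_of_notMem_of_mem hB'.1 hB'.2]
      exact h𝒜 A hA _ hSB
    · calc t ≤ #(A ∩ B) := h𝒜 A hA B hB
        _ ≤ _ := card_inter_le_card_compress_inter_compress A B
        _ = _ := by rw [compress_singleton_eq_self hB']
  intro A hA B hB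
  rw [UV.mem_compression] at hA hB
  rcases hA with ⟨hA, hSA⟩ | ⟨hA, A, hA₀, rfl⟩ <;> rcases hB with ⟨hB, hSB⟩ | ⟨hB, B, hB₀, rfl⟩
  · exact h𝒜 _ hA _ hB
  · exact inter_comm A _ ▸ mixed B hB₀ hB A hA hSA
  · exact mixed A hA₀ hA B hB hSB
  · exact (h𝒜 A hA₀ B hB₀).trans (card_inter_le_card_compress_inter_compress A B)

lemma compress_singleton_subset_insert (A : Finset α) : UV.compress {x} {a} A ⊆ insert x A := by
  unfold UV.compress
  split_ifs
  · grind
  · exact subset_insert x A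

lemma subset_of_mem_compression {s : Finset α} (hx : x ∈ s) (h𝒜 : ∀ A ∈ 𝒜, A ⊆ s) :
    ∀ A ∈ 𝓒 {x} {a} 𝒜, A ⊆ s := by
  intro A hA
  rcases UV.mem_compression.1 hA with ⟨hA, -⟩ | ⟨-, B, hB, rfl⟩
  · exact h𝒜 A hA
  · exact (compress_singleton_subset_insert B).trans (insert_subset hx (h𝒜 B hB))

lemma shadow_iterate_compression_subset (j : ℕ) (𝒜 : Finset (Finset α)) :
    ∂^[j] (𝓒 {x} {a} 𝒜) ⊆ 𝓒 {x} {a} (∂^[j] 𝒜) := by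
  induction j generalizing 𝒜 with
  | zero => exact Subset.rfl
  | succ j ih =>
    rw [Function.iterate_succ_apply, Function.iterate_succ_apply]
    exact (shadow_monotone.iterate j (UV.shadow_compression_subset_compression_shadow _ _
      (by simp [UV.isCompressed_self]))).trans (ih _)

lemma card_shadow_iterate_compression_le (j : ℕ) (𝒜 : Finset (Finset α)) :
    #(∂^[j] (𝓒 {x} {a} 𝒜)) ≤ #(∂^[j] 𝒜) :=
  (card_le_card (shadow_iterate_compression_subset j 𝒜)).trans_eq (UV.card_compression _ _ _)

lemma card_filter_mem_compression_lt (h : ¬UV.IsCompressed {x} {a} 𝒜) :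
    #{A ∈ 𝓒 {x} {a} 𝒜 | a ∈ A} < #{A ∈ 𝒜 | a ∈ A} := by
  have hsub : {A ∈ 𝓒 {x} {a} 𝒜 | a ∈ A} ⊆ {A ∈ 𝒜 | a ∈ A} := fun A hA ↦ by
    rw [mem_filter] at hA ⊢
    exact ⟨UV.mem_of_mem_compression hA.1 (singleton_subset_iff.2 hA.2) (by simp), hA.2⟩
  obtain ⟨A, hA, hA'⟩ : ∃ A ∈ 𝒜, A ∉ 𝓒 {x} {a} 𝒜 := by
    by_contra! h'
    exact h (eq_of_subset_of_card_le h' (UV.card_compression _ _ _).le).symm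
  have hSA : UV.compress {x} {a} A ∉ 𝒜 := fun hSA ↦ hA' (UV.mem_compression.2 (.inl ⟨hA, hSA⟩))
  have haA : a ∈ A := by
    by_contra haA
    rw [compress_singleton_eq_self (by tauto)] at hSA
    exact hSA hA
  refine card_lt_card ((ssubset_iff_of_subset hsub).2 ⟨A, mem_filter.2 ⟨hA, haA⟩, ?_⟩)
  exact fun h ↦ hA' (mem_filter.1 h).1

theorem exists_isCompressed_singleton {s : Finset α} {P : Finset (Finset α) → Prop}
    (hP : ∀ x ∈ s, ∀ 𝒜, P 𝒜 → P (𝓒 {x} {a} 𝒜)) {𝒜 : Finset (Finset α)} (h𝒜 : P 𝒜) :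
    ∃ ℬ, P ℬ ∧ ∀ x ∈ s, UV.IsCompressed {x} {a} ℬ := by
  by_cases h : ∀ x ∈ s, UV.IsCompressed {x} {a} 𝒜
  · exact ⟨𝒜, h𝒜, h⟩
  push Not at h
  obtain ⟨x, hx, hne⟩ := h
  have := card_filter_mem_compression_lt hne
  exact exists_isCompressed_singleton hP (hP x hx 𝒜 h𝒜)
termination_by #{A ∈ 𝒜 | a ∈ A}

lemma exists_isCompressed_of_le_card_inter {s : Finset α} {k : ℕ} (j : ℕ)
    (hs : ∀ A ∈ 𝒜, A ⊆ insert a s) (h𝒜 : (𝒜 : Set (Finset α)).Sized k)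
    (ht : ∀ A ∈ 𝒜, ∀ B ∈ 𝒜, t ≤ #(A ∩ B)) :
    ∃ ℬ : Finset (Finset α), (∀ A ∈ ℬ, A ⊆ insert a s) ∧ (ℬ : Set (Finset α)).Sized k ∧
      (∀ A ∈ ℬ, ∀ B ∈ ℬ, t ≤ #(A ∩ B)) ∧ #ℬ = #𝒜 ∧ #(∂^[j] ℬ) ≤ #(∂^[j] 𝒜) ∧
      ∀ x ∈ s, UV.IsCompressed {x} {a} ℬ := by
  obtain ⟨ℬ, ⟨hℬs, hℬk, hℬt, hcard, hshadow⟩, hℬ⟩ := exists_isCompressed_singleton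
    (P := fun ℬ ↦ (∀ A ∈ ℬ, A ⊆ insert a s) ∧ (ℬ : Set (Finset α)).Sized k ∧
      (∀ A ∈ ℬ, ∀ B ∈ ℬ, t ≤ #(A ∩ B)) ∧ #ℬ = #𝒜 ∧ #(∂^[j] ℬ) ≤ #(∂^[j] 𝒜))
    (fun x hx ℬ ⟨hs, hk, ht, hcard, hshadow⟩ ↦
      ⟨subset_of_mem_compression (mem_insert_of_mem hx) hs, hk.uvCompression (by simp),
        le_card_inter_of_mem_compression ht, (UV.card_compression _ _ _).trans hcard,
        (card_shadow_iterate_compression_le _ _).trans hshadow⟩)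
    ⟨hs, h𝒜, ht, rfl, le_rfl⟩
  exact ⟨ℬ, hℬs, hℬk, hℬt, hcard, hshadow, hℬ⟩

lemma card_le_card_shadow_iterate_of_card_add_le_s2 {s : Finset α} {k : ℕ} (hs : ∀ A ∈ 𝒜, A ⊆ s)
    (h𝒜 : (𝒜 : Set (Finset α)).Sized k) (htk : t ≤ k) (hst : #s + t ≤ 2 * k) :
    #𝒜 ≤ #(∂^[t] 𝒜) := by
  have hup : ∀ A ∈ 𝒜, k.choose t ≤ #((∂^[t] 𝒜).bipartiteAbove (fun A C ↦ C ⊆ A) A) := by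
    intro A hA
    calc k.choose t = #(A.powersetCard (k - t)) := by
          rw [card_powersetCard, h𝒜 hA, Nat.choose_symm htk]
      _ ≤ _ := card_le_card fun C hC ↦ by
          rw [mem_powersetCard] at hC
          refine (mem_bipartiteAbove _).2
            ⟨mem_shadow_iterate_iff_exists_sdiff.2 ⟨A, hA, hC.1, ?_⟩, hC.1⟩
          rw [card_sdiff_of_subset hC.1, hC.2, h𝒜 hA]
          omega
  have hdown : ∀ C ∈ ∂^[t] 𝒜, #(𝒜.bipartiteBelow (fun A C ↦ C ⊆ A) C) ≤ k.choose t := by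
    intro C hC
    obtain ⟨A, hA, hCA, hAC⟩ := mem_shadow_iterate_iff_exists_sdiff.1 hC
    have hC : #C = k - t := by
      rw [card_sdiff_of_subset hCA, h𝒜 hA] at hAC
      have := card_le_card hCA
      rw [h𝒜 hA] at this
      omega
    calc #(𝒜.bipartiteBelow (fun A C ↦ C ⊆ A) C) ≤ #((s \ C).powersetCard t) := by
          refine card_le_card_of_injOn (· \ C) (fun B hB ↦ ?_) fun B hB B' hB' h ↦ ?_
          · rw [mem_coe, mem_bipartiteBelow _] at hB
            rw [mem_coe, mem_powersetCard, card_sdiff_of_subset hB.2, h𝒜 hB.1, hC]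
            exact ⟨sdiff_subset_sdiff (hs B hB.1) Subset.rfl, by omega⟩
          · rw [mem_coe, mem_bipartiteBelow _] at hB hB'
            rw [← sdiff_union_of_subset hB.2, ← sdiff_union_of_subset hB'.2]
            exact congrArg (· ∪ C) h
      _ = (#s - (k - t)).choose t := by
          rw [card_powersetCard, card_sdiff_of_subset (hCA.trans (hs A hA)), hC]
      _ ≤ k.choose t := Nat.choose_le_choose t (by omega)
  exact Nat.le_of_mul_le_mul_right (card_mul_le_card_mul _ hup hdown) (Nat.choose_pos htk)

lemma shadow_iterate_nonMemberSubfamily_subset_s2 (t : ℕ) (a : α) (𝒜 : Finset (Finset α)) :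
    ∂^[t] (𝒜.nonMemberSubfamily a) ⊆ (∂^[t] 𝒜).nonMemberSubfamily a := by
  intro C hC
  obtain ⟨A, hA, hCA, -⟩ := mem_shadow_iterate_iff_exists_sdiff.1 hC
  rw [mem_nonMemberSubfamily] at hA ⊢
  exact ⟨shadow_monotone.iterate t (filter_subset _ _) hC, fun h ↦ hA.2 (hCA h)⟩

lemma shadow_iterate_memberSubfamily_subset_s2 (t : ℕ) (a : α) (𝒜 : Finset (Finset α)) :
    ∂^[t] (𝒜.memberSubfamily a) ⊆ (∂^[t] 𝒜).memberSubfamily a := by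
  intro C hC
  obtain ⟨A, hA, hCA, hAC⟩ := mem_shadow_iterate_iff_exists_sdiff.1 hC
  rw [mem_memberSubfamily] at hA ⊢
  refine ⟨mem_shadow_iterate_iff_exists_sdiff.2 ⟨insert a A, hA.1, insert_subset_insert a hCA, ?_⟩,
    fun h ↦ hA.2 (hCA h)⟩
  rwa [insert_sdiff_insert, sdiff_insert_of_notMem hA.2]

lemma sized_memberSubfamily {k : ℕ} (h𝒜 : (𝒜 : Set (Finset α)).Sized k) :
    (𝒜.memberSubfamily a : Set (Finset α)).Sized (k - 1) := by
  intro A hA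
  rw [mem_coe, mem_memberSubfamily] at hA
  have := h𝒜 hA.1
  rw [card_insert_of_notMem hA.2] at this
  omega

lemma le_card_inter_of_mem_memberSubfamily {s : Finset α} {k : ℕ}
    (hs : ∀ A ∈ 𝒜, A ⊆ insert a s) (h𝒜 : (𝒜 : Set (Finset α)).Sized k)
    (ht : ∀ A ∈ 𝒜, ∀ B ∈ 𝒜, t ≤ #(A ∩ B)) (hcomp : ∀ x ∈ s, UV.IsCompressed {x} {a} 𝒜)
    (hst : 2 * k < #(insert a s) + t) :
    ∀ A ∈ 𝒜.memberSubfamily a, ∀ B ∈ 𝒜.memberSubfamily a, t ≤ #(A ∩ B) := by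
  intro A hA B hB
  rw [mem_memberSubfamily] at hA hB
  -- The ground set has more than `2k - t` points, so some `y` lies outside
  -- `insert a A ∪ insert a B`; shifting `a` to `y` turns the intersection into `A ∩ B`.
  have hunion : #(insert a A ∪ insert a B) < #(insert a s) := by
    have := card_union_add_card_inter (insert a A) (insert a B)
    have := ht _ hA.1 _ hB.1
    rw [h𝒜 hA.1, h𝒜 hB.1] at *
    omega
  obtain ⟨y, hy, hyAB⟩ := exists_mem_notMem_of_card_lt_card hunion
  have hya : y ≠ a := by rintro rfl; simp at hyAB
  simp only [mem_union, mem_insert, hya, false_or, not_or] at hyAB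
  have hyA : insert y A ∈ 𝒜 := by
    have := UV.compress_mem_compression (u := {y}) (v := {a}) hA.1
    rwa [(hcomp y ((mem_insert.1 hy).resolve_left hya)).eq,
      compress_singleton_of_notMem_of_mem (by simp [hya, hyAB.1]) (mem_insert_self a A),
      erase_insert hA.2] at this
  calc t ≤ #(insert y A ∩ insert a B) := ht _ hyA _ hB.1
    _ = #(A ∩ B) := by congr 1; grind

theorem card_le_card_shadow_iterate_of_le_card_inter {s : Finset α} {k : ℕ}
    (hs : ∀ A ∈ 𝒜, A ⊆ s) (h𝒜 : (𝒜 : Set (Finset α)).Sized k)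
    (ht : ∀ A ∈ 𝒜, ∀ B ∈ 𝒜, t ≤ #(A ∩ B)) : #𝒜 ≤ #(∂^[t] 𝒜) := by
  induction s using Finset.induction_on generalizing 𝒜 k with
  | empty =>
    obtain rfl | ⟨A, hA⟩ := 𝒜.eq_empty_or_nonempty
    · simp
    have : t = 0 := by simpa [subset_empty.1 (hs A hA)] using ht A hA A hA
    simp [this]
  | insert a s _ ih =>
    obtain ⟨ℬ, hℬs, hℬk, hℬt, hcard, hshadow, hℬ⟩ :=
      exists_isCompressed_of_le_card_inter (s := s) t hs h𝒜 ht
    rw [← hcard]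
    refine le_trans ?_ hshadow
    obtain rfl | ⟨A, hA⟩ := ℬ.eq_empty_or_nonempty
    · simp
    by_cases hst : #(insert a s) + t ≤ 2 * k
    · exact card_le_card_shadow_iterate_of_card_add_le_s2 hℬs hℬk
        (by simpa [hℬk hA] using hℬt A hA A hA) hst
    have hmem : ∀ A ∈ ℬ.memberSubfamily a, A ⊆ s := fun A hA ↦ by
      rw [mem_memberSubfamily] at hA
      exact (subset_insert_iff_of_notMem hA.2).1 ((subset_insert a A).trans (hℬs _ hA.1))
    have hnonmem : ∀ A ∈ ℬ.nonMemberSubfamily a, A ⊆ s := fun A hA ↦ by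
      rw [mem_nonMemberSubfamily] at hA
      exact (subset_insert_iff_of_notMem hA.2).1 (hℬs _ hA.1)
    calc #ℬ = #(ℬ.memberSubfamily a) + #(ℬ.nonMemberSubfamily a) :=
          (card_memberSubfamily_add_card_nonMemberSubfamily a ℬ).symm
      _ ≤ #(∂^[t] (ℬ.memberSubfamily a)) + #(∂^[t] (ℬ.nonMemberSubfamily a)) := by
          refine add_le_add (ih hmem (sized_memberSubfamily hℬk)
            (le_card_inter_of_mem_memberSubfamily hℬs hℬk hℬt hℬ (by omega)))
            (ih hnonmem (hℬk.mono (filter_subset _ _))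
              fun A hA B hB ↦ hℬt A (filter_subset _ _ hA) B (filter_subset _ _ hB))
      _ ≤ #((∂^[t] ℬ).memberSubfamily a) + #((∂^[t] ℬ).nonMemberSubfamily a) :=
          add_le_add (card_le_card (shadow_iterate_memberSubfamily_subset_s2 t a ℬ))
            (card_le_card (shadow_iterate_nonMemberSubfamily_subset_s2 t a ℬ))
      _ = #(∂^[t] ℬ) := card_memberSubfamily_add_card_nonMemberSubfamily a _

end Katona

section Fintype

variable [Fintype α] {ℬ : Finset (Finset α)} {d ℓ : ℕ}

lemma card_slice_add_card_slice_le (hℬ : ∀ A ∈ ℬ, ∀ B ∈ ℬ, #(A ∪ B) ≤ d)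
    (hd : d < Fintype.card α) (hℓ : ℓ ≤ d + 1) :
    #(ℬ # (d + 1 - ℓ)) + #(ℬ # ℓ) ≤ (Fintype.card α).choose ℓ := by
  set n := Fintype.card α
  set 𝒮 := ∂^[n - d - 1] (ℬ # (d + 1 - ℓ))ᶜˢ
  have hcompl : ((ℬ # (d + 1 - ℓ))ᶜˢ : Set (Finset α)).Sized (n - (d + 1 - ℓ)) := by
    intro D hD
    rw [mem_coe, mem_compls, mem_slice] at hD
    have := card_le_univ D
    rw [← hD.2, card_compl]
    omega
  have hinter : ∀ D ∈ (ℬ # (d + 1 - ℓ))ᶜˢ, ∀ E ∈ (ℬ # (d + 1 - ℓ))ᶜˢ, n - d - 1 ≤ #(D ∩ E) := by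
    intro D hD E hE
    rw [mem_compls, mem_slice] at hD hE
    have := hℬ _ hD.1 _ hE.1
    rw [← compl_compl (D ∩ E), compl_inter, card_compl]
    omega
  have h𝒮 : (𝒮 : Set (Finset α)).Sized ℓ := by
    convert hcompl.shadow_iterate using 1
    omega
  have hdisj : Disjoint 𝒮 (ℬ # ℓ) := by
    refine disjoint_left.2 fun C hC𝒮 hCℬ ↦ ?_
    obtain ⟨D, hD, hCD, -⟩ := mem_shadow_iterate_iff_exists_sdiff.1 hC𝒮
    rw [mem_compls, mem_slice] at hD
    have := hℬ _ (mem_slice.1 hCℬ).1 _ hD.1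
    rw [card_union_of_disjoint (disjoint_compl_right.mono_left hCD), h𝒮 hC𝒮, hD.2] at this
    omega
  calc #(ℬ # (d + 1 - ℓ)) + #(ℬ # ℓ) ≤ #𝒮 + #(ℬ # ℓ) := by
        rw [← card_compls]
        exact Nat.add_le_add_right
          (card_le_card_shadow_iterate_of_le_card_inter (fun _ _ ↦ subset_univ _) hcompl hinter) _
    _ = #(𝒮 ∪ ℬ # ℓ) := (card_union_of_disjoint hdisj).symm
    _ ≤ n.choose ℓ :=
        Set.Sized.card_le (by rw [coe_union, Set.sized_union]; exact ⟨h𝒮, sized_slice⟩)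

lemma card_filter_min_eq_le (hℬ : ∀ A ∈ ℬ, ∀ B ∈ ℬ, #(A ∪ B) ≤ d)
    (hd : d < Fintype.card α) (hℓ : ℓ ≤ d + 1) :
    #{A ∈ ℬ | min #A (d + 1 - #A) = ℓ} ≤ (Fintype.card α).choose ℓ :=
  calc _ ≤ #(ℬ # (d + 1 - ℓ) ∪ ℬ # ℓ) := card_le_card fun A hA ↦ by
          rw [mem_filter] at hA
          have := union_self A ▸ hℬ A hA.1 A hA.1
          simp only [mem_union, mem_slice, hA.1, true_and]
          omega
    _ ≤ #(ℬ # (d + 1 - ℓ)) + #(ℬ # ℓ) := card_union_le _ _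
    _ ≤ _ := card_slice_add_card_slice_le hℬ hd hℓ

theorem card_le_sum_choose_of_card_union_le {t : ℕ} (hℬ : ∀ A ∈ ℬ, ∀ B ∈ ℬ, #(A ∪ B) ≤ 2 * t)
    (ht : 2 * t < Fintype.card α) :
    #ℬ ≤ ∑ ℓ ∈ range (t + 1), (Fintype.card α).choose ℓ := by
  calc #ℬ = ∑ ℓ ∈ range (t + 1), #{A ∈ ℬ | min #A (2 * t + 1 - #A) = ℓ} :=
        card_eq_sum_card_fiberwise fun A _ ↦ by simp only [coe_range, Set.mem_Iio]; omega
    _ ≤ _ := sum_le_sum fun ℓ hℓ ↦ card_filter_min_eq_le hℬ ht (by simp at hℓ; omega)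

end Fintype

theorem card_le_two_mul_sum_choose_of_card_union_le {n t : ℕ} {ℬ : Finset (Finset (Fin n))}
    (hℬ : ∀ A ∈ ℬ, ∀ B ∈ ℬ, #(A ∪ B) ≤ 2 * t + 1) (ht : 2 * t + 1 < n) :
    #ℬ ≤ 2 * ∑ ℓ ∈ range (t + 1), (n - 1).choose ℓ := by
  have hmiddle : #{A ∈ ℬ | min #A (2 * t + 1 + 1 - #A) = t + 1} ≤ (n - 1).choose t := by
    have hsub : {A ∈ ℬ | min #A (2 * t + 1 + 1 - #A) = t + 1} ⊆ ℬ # (t + 1) := fun A hA ↦ by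
      rw [mem_filter] at hA
      exact mem_slice.2 ⟨hA.1, by omega⟩
    have hint : (ℬ # (t + 1) : Set (Finset (Fin n))).Intersecting := by
      intro A hA B hB hAB
      rw [mem_coe, mem_slice] at hA hB
      have := hℬ _ hA.1 _ hB.1
      rw [card_union_of_disjoint hAB, hA.2, hB.2] at this
      omega
    exact (card_le_card hsub).trans (erdos_ko_rado hint sized_slice (by omega))
  obtain ⟨m, rfl⟩ : ∃ m, n = m + 1 := ⟨n - 1, by omega⟩
  calc #ℬ = ∑ ℓ ∈ range (t + 2), #{A ∈ ℬ | min #A (2 * t + 1 + 1 - #A) = ℓ} :=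
        card_eq_sum_card_fiberwise fun A _ ↦ by simp only [coe_range, Set.mem_Iio]; omega
    _ ≤ ∑ ℓ ∈ range (t + 1), (m + 1).choose ℓ + m.choose t := by
        rw [sum_range_succ]
        refine add_le_add (sum_le_sum fun ℓ hℓ ↦ ?_) hmiddle
        simpa using card_filter_min_eq_le hℬ (by simpa using ht) (by simp at hℓ; omega)
    _ = 2 * ∑ ℓ ∈ range (t + 1), (m + 1 - 1).choose ℓ := by
        rw [Nat.add_sub_cancel, Nat.two_mul_sum_range_choose]

end Finset

theorem kleitman_general {n d r : ℕ} (hdn : d < n)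
    (hr : r = 0 ∨ r = 1) (hmod : d % 2 = r % 2)
    (F : Finset (Finset (Fin n)))
    (hdiam : ∀ A ∈ F, ∀ B ∈ F, (A ∆ B).card ≤ d) :
    F.card ≤ 2 ^ r * ∑ k ∈ Finset.range (d / 2 + 1), (n - r).choose k := by
  obtain ⟨ℬ, hcard, hℬ, hlower⟩ := exists_isLowerSet_card_eq hdiam
  have hunion := card_union_le_of_isLowerSet hlower hℬ
  rw [← hcard]
  rcases hr with rfl | rfl
  · obtain ⟨t, rfl⟩ : ∃ t, d = 2 * t := ⟨d / 2, by omega⟩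
    simpa using card_le_sum_choose_of_card_union_le hunion (by simpa using hdn)
  · obtain ⟨t, rfl⟩ : ∃ t, d = 2 * t + 1 := ⟨d / 2, by omega⟩
    simpa [Nat.add_div] using card_le_two_mul_sum_choose_of_card_union_le hunion hdn

theorem kleitman {n d r : ℕ} (hd : 0 < d) (hdn : d < n)
    (hr : r = 0 ∨ r = 1) (hmod : d % 2 = r % 2)
    (F : Finset (Finset (Fin n)))
    (hdiam : ∀ A ∈ F, ∀ B ∈ F, (A ∆ B).card ≤ d) :
    F.card ≤ 2 ^ r * ∑ k ∈ Finset.range (d / 2 + 1), (n - r).choose k :=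
  kleitman_general hdn hr hmod F hdiam
end

section
/- Let 0 ≤ d ≤ n be integers, let H be a k-uniform family of subsets of [n], and let 𝔽 be a field. Suppose there is a polynomial P(x₁,…,xₙ,y₁,…,yₙ) over 𝔽 of total degree at most d such that P(v_F, v_F) ≠ 0 for each F ∈ H and P(v_F, v_G) = 0 for all distinct F, G ∈ H, where v_F ∈ {0,1}ⁿ is the characteristic vector of F. Then |H| ≤ 2 · C(n, ⌊d/2⌋). -/
/-!
Let `t = ⌊d/2⌋` and let `M` be the `H × H` matrix `M F G = P(v_F, v_G)`; it is diagonal with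
nonzero diagonal, so its rank is `|H|`. On 0-1 vectors a monomial `x^a y^b` takes the value
`[supp a ⊆ F] [supp b ⊆ G]`, and since `|supp a| + |supp b| ≤ d`, one of the two supports has at
most `t` elements. Splitting the monomials accordingly writes `M = M₁ + M₂` where every row of
`M₁` and every column of `M₂` lies in the row space of the inclusion matrix `N` of the sets of
size `≤ t` against `H`. Hence `|H| ≤ 2 rank N`, and `rank N ≤ C(n, t)` when `t ≤ k` (when `k ≤ t`,
trivially `|H| ≤ C(n, k) ≤ C(n, t)`).
-/

open Finset MvPolynomial

/-- Characteristic (0-1) vector of a subset of `[n]` in a field. -/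
def charVec (𝔽 : Type*) [Field 𝔽] {n : ℕ} (F : Finset (Fin n)) : Fin n → 𝔽 :=
  fun i => if i ∈ F then 1 else 0

namespace Matrix

variable {m o : Type*} [Fintype o]

theorem rank_add_le {K : Type*} [Field K] [Finite m] (A B : Matrix m o K) :
    (A + B).rank ≤ A.rank + B.rank := by
  rw [rank, mulVecLin_add]
  exact (Submodule.finrank_mono (LinearMap.range_add_le _ _)).trans
    (Submodule.finrank_add_le_finrank_add_finrank _ _)

theorem rank_le_rank_of_forall_row_mem_span {K ρ : Type*} [Field K] [Finite m] [Finite ρ]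
    {A : Matrix m o K} {B : Matrix ρ o K} (h : ∀ i, A i ∈ Submodule.span K (Set.range B)) :
    A.rank ≤ B.rank := by
  rw [rank_eq_finrank_span_row, rank_eq_finrank_span_row]
  exact Submodule.finrank_mono (Submodule.span_le.mpr (Set.range_subset_iff.mpr h))

theorem exists_eq_mul_of_free_range {R : Type*} [CommRing R] [StrongRankCondition R] [Fintype m]
    (A : Matrix m o R) [Module.Free R (LinearMap.range A.mulVecLin)]
    [Module.Finite R (LinearMap.range A.mulVecLin)] :
    ∃ (B : Matrix m (Fin A.rank) R) (C : Matrix (Fin A.rank) o R), A = B * C := by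
  classical
  let b := Module.finBasis R (LinearMap.range A.mulVecLin)
  let col (l : o) : LinearMap.range A.mulVecLin := ⟨A.col l, Pi.single l 1, by simp⟩
  refine ⟨of fun i j => (b j : m → R) i, of fun j l => b.repr (col l) j, ?_⟩
  ext i l
  have := congr_fun (congr_arg Subtype.val (b.sum_repr (col l))) i
  simp only [col, Submodule.coe_sum, Submodule.coe_smul, Finset.sum_apply, Pi.smul_apply,
    smul_eq_mul] at this
  simp only [mul_apply, of_apply]
  exact this.symm.trans (Finset.sum_congr rfl fun j _ => mul_comm _ _)

/-- Over a principal ideal domain the column space is free, so `A` factors through `R ^ rank A`,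
and the factorization survives any ring homomorphism. -/
theorem rank_map_le {R S : Type*} [CommRing R] [IsDomain R] [IsPrincipalIdealRing R]
    [CommRing S] [StrongRankCondition S] [Fintype m] (A : Matrix m o R) (f : R →+* S) :
    (A.map f).rank ≤ A.rank := by
  obtain ⟨B, C, hA⟩ := A.exists_eq_mul_of_free_range
  calc (A.map f).rank = (B.map f * C.map f).rank := by rw [← Matrix.map_mul, ← hA]
    _ ≤ (B.map f).rank := rank_mul_le_left _ _
    _ ≤ Fintype.card (Fin A.rank) := rank_le_card_width _
    _ = A.rank := Fintype.card_fin _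

theorem IsDiag.rank_eq_card {K : Type*} [Field K] [DecidableEq o] {M : Matrix o o K}
    (hM : M.IsDiag) (h : ∀ i, M i i ≠ 0) : M.rank = Fintype.card o := by
  rw [← hM.diagonal_diag, rank_of_det_ne_zero]
  rw [det_diagonal]
  exact prod_ne_zero_iff.mpr fun i _ => h i

end Matrix

theorem Nat.choose_le_choose_of_le_of_le_half {n a b : ℕ} (hab : a ≤ b) (hb : b ≤ n / 2) :
    n.choose a ≤ n.choose b := by
  induction b, hab using Nat.le_induction with
  | base => exact le_rfl
  | succ b _ ih => exact (ih (by omega)).trans (Nat.choose_le_succ_of_lt_half_left (by omega))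

section InclusionMatrix

variable {α : Type*} [DecidableEq α]

theorem card_filter_subset_powersetCard {S G : Finset α} {t : ℕ} (hSG : S ⊆ G) (hS : #S ≤ t) :
    #{T ∈ powersetCard t G | S ⊆ T} = (#G - #S).choose (t - #S) := by
  rw [← card_sdiff_of_subset hSG, ← card_powersetCard]
  refine card_nbij' (· \ S) (· ∪ S) ?_ ?_ ?_ ?_
  · intro T hT
    simp only [mem_coe, mem_filter, mem_powersetCard] at hT ⊢
    obtain ⟨⟨hTG, hcard⟩, hST⟩ := hT
    exact ⟨sdiff_subset_sdiff hTG le_rfl, by rw [card_sdiff_of_subset hST, hcard]⟩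
  · intro U hU
    simp only [mem_coe, mem_filter, mem_powersetCard] at hU ⊢
    have hdisj : Disjoint U S := disjoint_of_subset_left hU.1 sdiff_disjoint
    refine ⟨⟨union_subset (hU.1.trans sdiff_subset) hSG, ?_⟩, subset_union_right⟩
    rw [card_union_of_disjoint hdisj, hU.2]
    omega
  · intro T hT
    simp only [mem_coe, mem_filter] at hT
    exact sdiff_union_of_subset hT.2
  · intro U hU
    simp only [mem_coe, mem_powersetCard] at hU
    exact union_sdiff_cancel_right (disjoint_of_subset_left hU.1 sdiff_disjoint)

def inclusionMatrix (R : Type*) [Zero R] [One R] (𝒜 ℬ : Finset (Finset α)) : Matrix 𝒜 ℬ R :=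
  Matrix.of fun S T => if S.1 ⊆ T.1 then 1 else 0

theorem inclusionMatrix_map {R S : Type*} [NonAssocSemiring R] [NonAssocSemiring S]
    (𝒜 ℬ : Finset (Finset α)) (f : R →+* S) :
    (inclusionMatrix R 𝒜 ℬ).map f = inclusionMatrix S 𝒜 ℬ := by
  ext
  simp only [inclusionMatrix, Matrix.map_apply, Matrix.of_apply]
  split_ifs <;> simp

theorem inclusionMatrix_mul_inclusionMatrix_apply [Fintype α] (R : Type*) [NonAssocSemiring R]
    {𝒜 ℬ : Finset (Finset α)} {t : ℕ} (S : 𝒜) (G : ℬ) (hS : #S.1 ≤ t) :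
    (inclusionMatrix R 𝒜 (powersetCard t univ) * inclusionMatrix R (powersetCard t univ) ℬ) S G =
      if S.1 ⊆ G.1 then ((#G.1 - #S.1).choose (t - #S.1) : R) else 0 := by
  simp only [inclusionMatrix, Matrix.mul_apply, Matrix.of_apply, mul_boole]
  rw [sum_coe_sort (powersetCard t univ)
    (fun T => if T ⊆ G.1 then (if S.1 ⊆ T then (1 : R) else 0) else 0)]
  split_ifs with hSG
  · rw [← card_filter_subset_powersetCard hSG hS, ← sum_boole, ← sum_filter]
    congr 1
    ext T
    simp only [mem_filter, mem_powersetCard, subset_univ, true_and]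
    tauto
  · exact sum_eq_zero fun T _ =>
      ite_eq_right_iff.mpr fun hTG => if_neg fun hST => hSG (hST.trans hTG)

theorem diagonal_mul_inclusionMatrix [Fintype α] (R : Type*) [CommRing R] {t k : ℕ}
    {𝒜 : Finset (Finset α)} (h𝒜 : ∀ S ∈ 𝒜, #S ≤ t) {H : Finset (Finset α)}
    (hH : ∀ G ∈ H, #G = k) :
    Matrix.diagonal (fun S : 𝒜 => ((k - #S.1).choose (t - #S.1) : R)) * inclusionMatrix R 𝒜 H =
      inclusionMatrix R 𝒜 (powersetCard t univ) * inclusionMatrix R (powersetCard t univ) H := by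
  ext S G
  rw [inclusionMatrix_mul_inclusionMatrix_apply R S G (h𝒜 S.1 S.2), Matrix.diagonal_mul,
    hH G.1 G.2]
  simp only [inclusionMatrix, Matrix.of_apply, mul_boole]

theorem rank_inclusionMatrix_int_le [Fintype α] {t k : ℕ} (htk : t ≤ k)
    {𝒜 : Finset (Finset α)} (h𝒜 : ∀ S ∈ 𝒜, #S ≤ t) {H : Finset (Finset α)}
    (hH : ∀ G ∈ H, #G = k) :
    (inclusionMatrix ℤ 𝒜 H).rank ≤ (Fintype.card α).choose t := by
  have hdet : (Matrix.diagonal fun S : 𝒜 => ((k - #S.1).choose (t - #S.1) : ℤ)).det ≠ 0 := by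
    rw [Matrix.det_diagonal]
    exact prod_ne_zero_iff.mpr fun S _ => by
      have := h𝒜 S.1 S.2
      exact_mod_cast (Nat.choose_pos (by omega)).ne'
  calc (inclusionMatrix ℤ 𝒜 H).rank
      = (inclusionMatrix ℤ 𝒜 (powersetCard t univ) *
          inclusionMatrix ℤ (powersetCard t univ) H).rank := by
        rw [← diagonal_mul_inclusionMatrix ℤ h𝒜 hH,
          Matrix.rank_mul_eq_right_of_det_ne_zero _ _ hdet]
    _ ≤ (inclusionMatrix ℤ 𝒜 (powersetCard t univ)).rank := Matrix.rank_mul_le_left _ _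
    _ ≤ Fintype.card (powersetCard t (univ : Finset α)) := Matrix.rank_le_card_width _
    _ = (Fintype.card α).choose t := by rw [Fintype.card_coe, card_powersetCard, card_univ]

/-- The binomial coefficients in `diagonal_mul_inclusionMatrix` may vanish in `K`, so the
argument runs over `ℤ`, where they do not, and is transported to `K` by `Matrix.rank_map_le`. -/
theorem rank_inclusionMatrix_le [Fintype α] (K : Type*) [Field K] {t k : ℕ} (htk : t ≤ k)
    {𝒜 : Finset (Finset α)} (h𝒜 : ∀ S ∈ 𝒜, #S ≤ t) {H : Finset (Finset α)}
    (hH : ∀ G ∈ H, #G = k) :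
    (inclusionMatrix K 𝒜 H).rank ≤ (Fintype.card α).choose t := by
  rw [← inclusionMatrix_map 𝒜 H (Int.castRingHom K)]
  exact (Matrix.rank_map_le _ _).trans (rank_inclusionMatrix_int_le htk h𝒜 hH)

end InclusionMatrix

theorem MvPolynomial.eval_indicator {σ R : Type*} [CommRing R] [DecidableEq σ] (U : Finset σ)
    (p : MvPolynomial σ R) :
    eval (fun i => if i ∈ U then 1 else 0) p =
      ∑ μ ∈ p.support, if μ.support ⊆ U then coeff μ p else 0 := by
  rw [eval_eq]
  refine sum_congr rfl fun μ _ => ?_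
  rw [← mul_boole]
  congr 1
  calc ∏ i ∈ μ.support, (if i ∈ U then (1 : R) else 0) ^ μ i
      = ∏ i ∈ μ.support, if i ∈ U then (1 : R) else 0 := prod_congr rfl fun i hi => by
        rw [ite_pow, one_pow, zero_pow (Finsupp.mem_support_iff.mp hi)]
    _ = if μ.support ⊆ U then 1 else 0 := by simp only [prod_boole, subset_iff]

theorem card_support_toLeft_add_toRight_le_totalDegree {σ τ R : Type*} [CommSemiring R]
    {P : MvPolynomial (σ ⊕ τ) R} {μ : σ ⊕ τ →₀ ℕ} (hμ : μ ∈ P.support) :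
    #μ.support.toLeft + #μ.support.toRight ≤ P.totalDegree := by
  rw [card_toLeft_add_card_toRight]
  refine le_trans ?_ (le_totalDegree hμ)
  have := card_nsmul_le_sum μ.support μ 1 fun i hi =>
    Nat.one_le_iff_ne_zero.mpr (Finsupp.mem_support_iff.mp hi)
  simpa [Finsupp.sum] using this

section MonomialMatrix

variable {α K : Type*} [DecidableEq α] [Field K]

theorem sum_ite_subset_mem_span_inclusionMatrix {σ : Type*} {𝒜 H : Finset (Finset α)}
    (s : Finset σ) (c : σ → K) (S : σ → Finset α) (hS : ∀ μ ∈ s, S μ ∈ 𝒜) :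
    (fun G : H => ∑ μ ∈ s, if S μ ⊆ G.1 then c μ else 0) ∈
      Submodule.span K (Set.range (inclusionMatrix K 𝒜 H)) := by
  have : (fun G : H => ∑ μ ∈ s, if S μ ⊆ G.1 then c μ else 0) =
      ∑ μ ∈ s, fun G : H => if S μ ⊆ G.1 then c μ else 0 := by
    funext G; rw [Finset.sum_apply]
  rw [this]
  refine Submodule.sum_mem _ fun μ hμ => ?_
  have hrow : (fun G : H => if S μ ⊆ G.1 then c μ else 0) =
      c μ • inclusionMatrix K 𝒜 H ⟨S μ, hS μ hμ⟩ := by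
    funext G; simp [inclusionMatrix]
  rw [hrow]
  exact Submodule.smul_mem _ _ (Submodule.subset_span (Set.mem_range_self _))

/-- The values `∑_{μ ∈ s} c μ (v_F, v_G)^μ` of a polynomial in `x, y` at pairs of
characteristic vectors, using that `(v_F, v_G)^μ` is `1` if the support of `μ` lies in `F ⊔ G`
and `0` otherwise. -/
def monomialMatrix (s : Finset (α ⊕ α →₀ ℕ)) (c : (α ⊕ α →₀ ℕ) → K) (H : Finset (Finset α)) :
    Matrix H H K :=
  Matrix.of fun F G => ∑ μ ∈ s, if μ.support ⊆ F.1.disjSum G.1 then c μ else 0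

theorem monomialMatrix_filter_add_filter_not (s : Finset (α ⊕ α →₀ ℕ))
    (p : (α ⊕ α →₀ ℕ) → Prop) [DecidablePred p] (c : (α ⊕ α →₀ ℕ) → K)
    (H : Finset (Finset α)) :
    monomialMatrix {μ ∈ s | p μ} c H + monomialMatrix {μ ∈ s | ¬p μ} c H =
      monomialMatrix s c H := by
  ext F G
  exact sum_filter_add_sum_filter_not s p _

theorem rank_monomialMatrix_le_of_toRight_mem {s : Finset (α ⊕ α →₀ ℕ)}
    {𝒜 : Finset (Finset α)} (h : ∀ μ ∈ s, μ.support.toRight ∈ 𝒜) (c : (α ⊕ α →₀ ℕ) → K)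
    (H : Finset (Finset α)) :
    (monomialMatrix s c H).rank ≤ (inclusionMatrix K 𝒜 H).rank := by
  refine Matrix.rank_le_rank_of_forall_row_mem_span fun F => ?_
  convert sum_ite_subset_mem_span_inclusionMatrix s
    (fun μ => if μ.support.toLeft ⊆ F.1 then c μ else 0) _ h using 1
  funext G
  refine sum_congr rfl fun μ _ => ?_
  simp only [subset_disjSum, ← ite_and, and_comm]

theorem rank_monomialMatrix_le_of_toLeft_mem {s : Finset (α ⊕ α →₀ ℕ)}
    {𝒜 : Finset (Finset α)} (h : ∀ μ ∈ s, μ.support.toLeft ∈ 𝒜) (c : (α ⊕ α →₀ ℕ) → K)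
    (H : Finset (Finset α)) :
    (monomialMatrix s c H).rank ≤ (inclusionMatrix K 𝒜 H).rank := by
  rw [← Matrix.rank_transpose]
  refine Matrix.rank_le_rank_of_forall_row_mem_span fun G => ?_
  convert sum_ite_subset_mem_span_inclusionMatrix s
    (fun μ => if μ.support.toRight ⊆ G.1 then c μ else 0) _ h using 1
  funext F
  refine sum_congr rfl fun μ _ => ?_
  simp only [subset_disjSum, ← ite_and]

theorem rank_monomialMatrix_support_le [Fintype α] {d : ℕ} {P : MvPolynomial (α ⊕ α) K}
    (hdeg : P.totalDegree ≤ d) (H : Finset (Finset α)) :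
    (monomialMatrix P.support (coeff · P) H).rank ≤
      2 * (inclusionMatrix K ({S | #S ≤ d / 2} : Finset (Finset α)) H).rank := by
  rw [← monomialMatrix_filter_add_filter_not P.support (#·.support.toRight ≤ d / 2), two_mul]
  refine (Matrix.rank_add_le _ _).trans (add_le_add ?_ ?_)
  · exact rank_monomialMatrix_le_of_toRight_mem
      (fun μ hμ => by simpa using (mem_filter.mp hμ).2) _ H
  · refine rank_monomialMatrix_le_of_toLeft_mem (fun μ hμ => ?_) _ H
    obtain ⟨hμP, hμ⟩ := mem_filter.mp hμ
    have := card_support_toLeft_add_toRight_le_totalDegree hμP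
    simp only [mem_filter, mem_univ, true_and]
    omega

end MonomialMatrix

theorem sum_elim_charVec {K : Type*} [Field K] {n : ℕ} (F G : Finset (Fin n)) :
    Sum.elim (charVec K F) (charVec K G) = fun i => if i ∈ F.disjSum G then 1 else 0 := by
  funext i
  cases i <;> simp [charVec]

theorem eval_charVec_matrix_eq_monomialMatrix {n : ℕ} {K : Type*} [Field K]
    (P : MvPolynomial (Fin n ⊕ Fin n) K) (H : Finset (Finset (Fin n))) :
    Matrix.of (fun F G : H => eval (Sum.elim (charVec K F) (charVec K G)) P) =
      monomialMatrix P.support (coeff · P) H := by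
  ext F G
  rw [Matrix.of_apply, sum_elim_charVec, eval_indicator]
  rfl

theorem uniform_CLP {n d k : ℕ} (hdn : d ≤ n) (𝔽 : Type*) [Field 𝔽]
    (H : Finset (Finset (Fin n))) (hunif : ∀ F ∈ H, F.card = k)
    (P : MvPolynomial (Fin n ⊕ Fin n) 𝔽) (hdeg : P.totalDegree ≤ d)
    (hdiag : ∀ F ∈ H, eval (Sum.elim (charVec 𝔽 F) (charVec 𝔽 F)) P ≠ 0)
    (hoff : ∀ F ∈ H, ∀ G ∈ H, F ≠ G →
      eval (Sum.elim (charVec 𝔽 F) (charVec 𝔽 G)) P = 0) :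
    H.card ≤ 2 * n.choose (d / 2) := by
  obtain hkt | htk := le_or_gt k (d / 2)
  · calc #H ≤ n.choose k := by simpa using Set.Sized.card_le (𝒜 := H) hunif
      _ ≤ n.choose (d / 2) := Nat.choose_le_choose_of_le_of_le_half hkt (by omega)
      _ ≤ 2 * n.choose (d / 2) := by omega
  let M : Matrix H H 𝔽 := Matrix.of fun F G => eval (Sum.elim (charVec 𝔽 F) (charVec 𝔽 G)) P
  have hM : M.IsDiag := fun F G hFG => hoff F F.2 G G.2 (Subtype.coe_ne_coe.mpr hFG)
  calc #H = M.rank := by rw [hM.rank_eq_card fun F => hdiag F F.2, Fintype.card_coe]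
    _ ≤ 2 * (inclusionMatrix 𝔽 ({S | #S ≤ d / 2} : Finset (Finset (Fin n))) H).rank := by
      rw [show M = _ from eval_charVec_matrix_eq_monomialMatrix P H]
      exact rank_monomialMatrix_support_le hdeg H
    _ ≤ 2 * n.choose (d / 2) := by
      gcongr
      simpa using rank_inclusionMatrix_le 𝔽 htk.le (fun S hS => (mem_filter.mp hS).2) hunif
end

section
/- For integers 0 ≤ k ≤ n/2, the number of subsets G = {s₁ < s₂ < … < s_j} of [n] with j ≤ k and s_i ≥ 2i for every 1 ≤ i ≤ j equals C(n, k). -/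
open Finset

/-- `D m n`: the subsets `{s₁ < s₂ < ⋯ < s_t}` of `{1,…,n}` with `t ≤ m` and
`s_i ≥ 2i` for all `1 ≤ i ≤ t` (indexing via the increasing enumeration). -/
def D (m n : ℕ) : Finset (Finset ℕ) :=
  (Finset.Icc 1 n).powerset.filter
    (fun G => G.card ≤ m ∧ ∀ i < G.card, 2 * (i + 1) ≤ (G.sort (· ≤ ·)).getD i 0)

/-! Sorting `insert (n + 1) G` for `G ⊆ [n]` appends `n + 1` to the sorted list of `G`, so
`insert (n + 1) G` satisfies the condition `s_i ≥ 2i` exactly when `G` does and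
`2 (|G| + 1) ≤ n + 1`. Splitting `D_{k+1,n+1}` according to whether `n + 1 ∈ G` therefore gives
Pascal's rule `|D_{k+1,n+1}| = |D_{k+1,n}| + |D_{k,n}|` whenever `2 (k + 1) ≤ n + 1`. The only
term of the induction leaving the range `2k ≤ n` is `D_{k+1,2k+1}`, which equals `D_{k,2k+1}`
because a set satisfying the condition inside `[n]` has at most `n / 2` elements; and
`C(2k+1, k+1) = C(2k+1, k)`. -/

theorem Finset.sort_insert_of_forall_lt {α : Type*} [LinearOrder α] {s : Finset α} {a : α}
    (h : ∀ b ∈ s, b < a) : (insert a s).sort = s.sort ++ [a] := by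
  have ha : a ∉ s := fun ha => lt_irrefl a (h a ha)
  refine List.Perm.eq_of_sortedLE (sortedLT_sort _).sortedLE ?_ ?_
  · rw [List.sortedLE_iff_pairwise, List.pairwise_append]
    exact ⟨(sortedLT_sort s).sortedLE.pairwise, by simp, fun b hb _ hc =>
      (List.mem_singleton.mp hc) ▸ (h b ((mem_sort _).mp hb)).le⟩
  · rw [← Multiset.coe_eq_coe, sort_eq, insert_val_of_notMem ha, ← Multiset.coe_add,
      Multiset.coe_singleton, add_comm, Multiset.singleton_add, sort_eq]

def Admissible (G : Finset ℕ) : Prop :=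
  ∀ i < G.card, 2 * (i + 1) ≤ (G.sort (· ≤ ·)).getD i 0

lemma mem_D {k n : ℕ} {G : Finset ℕ} :
    G ∈ D k n ↔ G ⊆ Icc 1 n ∧ G.card ≤ k ∧ Admissible G := by
  rw [D, mem_filter, mem_powerset, Admissible]

lemma admissible_insert_iff {G : Finset ℕ} {a : ℕ} (h : ∀ b ∈ G, b < a) :
    Admissible (insert a G) ↔ Admissible G ∧ 2 * (G.card + 1) ≤ a := by
  have hlen : (G.sort (· ≤ ·)).length = G.card := length_sort _
  rw [Admissible, Admissible, card_insert_of_notMem fun ha => lt_irrefl a (h a ha),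
    sort_insert_of_forall_lt h]
  constructor
  · intro hA
    refine ⟨fun i hi => ?_, ?_⟩
    · simpa only [List.getD_append _ _ _ _ (hlen ▸ hi)] using hA i (by omega)
    · simpa [List.getD_append_right _ _ _ _ hlen.le, hlen] using hA G.card (by omega)
  · rintro ⟨hA, ha⟩ i hi
    rcases Nat.lt_or_ge i G.card with hi' | hi'
    · rw [List.getD_append _ _ _ _ (hlen ▸ hi')]
      exact hA i hi'
    · obtain rfl : i = G.card := by omega
      simpa [List.getD_append_right _ _ _ _ hlen.le, hlen] using ha

lemma two_mul_card_le_of_admissible {G : Finset ℕ} {n : ℕ} (hG : ∀ x ∈ G, x ≤ n)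
    (hA : Admissible G) : 2 * G.card ≤ n := by
  rcases Nat.eq_zero_or_pos G.card with h0 | hpos
  · simp [h0]
  have hlast : G.card - 1 < (G.sort (· ≤ ·)).length := by rw [length_sort]; omega
  have hle := hA (G.card - 1) (by omega)
  rw [List.getD_eq_getElem _ _ hlast] at hle
  have := hG _ ((mem_sort _).mp (List.getElem_mem hlast))
  omega

lemma D_zero_left (n : ℕ) : D 0 n = {∅} := by
  ext G
  simp only [mem_D, nonpos_iff_eq_zero, card_eq_zero, mem_singleton]
  constructor
  · exact fun h => h.2.1
  · rintro rfl
    exact ⟨empty_subset _, rfl, fun i hi => absurd hi (Nat.not_lt_zero i)⟩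

lemma D_succ_left_of_lt {k n : ℕ} (h : n < 2 * (k + 1)) : D (k + 1) n = D k n := by
  ext G
  simp only [mem_D]
  refine ⟨fun ⟨hG, _, hA⟩ => ⟨hG, ?_, hA⟩, fun ⟨hG, hk, hA⟩ => ⟨hG, by omega, hA⟩⟩
  have := two_mul_card_le_of_admissible (fun x hx => (mem_Icc.mp (hG hx)).2) hA
  omega

lemma subset_Icc_succ_iff {G : Finset ℕ} {n : ℕ} (hn : n + 1 ∉ G) :
    G ⊆ Icc 1 (n + 1) ↔ G ⊆ Icc 1 n := by
  rw [← insert_Icc_right_eq_Icc_add_one (by omega), subset_insert_iff_of_notMem hn]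

lemma filter_notMem_D_succ (k n : ℕ) : (D k (n + 1)).filter (n + 1 ∉ ·) = D k n := by
  ext G
  rw [mem_filter, mem_D, mem_D]
  constructor
  · rintro ⟨⟨hG, hk, hA⟩, hn⟩
    exact ⟨(subset_Icc_succ_iff hn).mp hG, hk, hA⟩
  · rintro ⟨hG, hk, hA⟩
    have hn : n + 1 ∉ G := fun hn => by simpa using hG hn
    exact ⟨⟨(subset_Icc_succ_iff hn).mpr hG, hk, hA⟩, hn⟩

lemma filter_mem_D_succ {k n : ℕ} (h : 2 * (k + 1) ≤ n + 1) :
    (D (k + 1) (n + 1)).filter (n + 1 ∈ ·) = (D k n).image (insert (n + 1)) := by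
  have lt_succ_of_subset {H : Finset ℕ} (hH : H ⊆ Icc 1 n) : ∀ b ∈ H, b < n + 1 :=
    fun b hb => Nat.lt_succ_of_le (mem_Icc.mp (hH hb)).2
  ext G
  rw [mem_filter, mem_image]
  constructor
  · rintro ⟨hG, hn⟩
    obtain ⟨hG, hk, hA⟩ := mem_D.mp hG
    have hH : G.erase (n + 1) ⊆ Icc 1 n :=
      (subset_Icc_succ_iff (notMem_erase _ _)).mp ((erase_subset _ _).trans hG)
    rw [← insert_erase hn, admissible_insert_iff (lt_succ_of_subset hH)] at hA
    refine ⟨G.erase (n + 1), mem_D.mpr ⟨hH, ?_, hA.1⟩, insert_erase hn⟩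
    rw [card_erase_of_mem hn]
    omega
  · rintro ⟨H, hH, rfl⟩
    obtain ⟨hH, hk, hA⟩ := mem_D.mp hH
    refine ⟨mem_D.mpr ⟨?_, ?_, ?_⟩, mem_insert_self _ _⟩
    · rw [← insert_Icc_right_eq_Icc_add_one (by omega)]
      exact insert_subset_insert _ hH
    · exact (card_insert_le _ _).trans (by omega)
    · exact (admissible_insert_iff (lt_succ_of_subset hH)).mpr ⟨hA, by omega⟩

lemma card_D_succ_succ {k n : ℕ} (h : 2 * (k + 1) ≤ n + 1) :
    (D (k + 1) (n + 1)).card = (D (k + 1) n).card + (D k n).card := by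
  have hinj : Set.InjOn (insert (n + 1)) (D k n : Set (Finset ℕ)) := by
    intro G hG G' hG' hGG'
    have hnotMem : ∀ H ∈ D k n, n + 1 ∉ H := fun H hH hn => by simpa using (mem_D.mp hH).1 hn
    rw [← erase_insert (hnotMem G hG), ← erase_insert (hnotMem G' hG'), hGG']
  rw [← card_filter_add_card_filter_not (n + 1 ∈ ·), filter_mem_D_succ h, filter_notMem_D_succ,
    card_image_of_injOn hinj, add_comm]

theorem card_D {k n : ℕ} (hk : 2 * k ≤ n) : (D k n).card = n.choose k := by
  induction n generalizing k with
  | zero =>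
    obtain rfl : k = 0 := by omega
    simp [D_zero_left]
  | succ n ih =>
    rcases k with _ | k
    · simp [D_zero_left]
    rw [card_D_succ_succ hk, ih (k := k) (by omega), Nat.choose_succ_succ', add_comm]
    rcases Nat.lt_or_ge n (2 * (k + 1)) with hlt | hge
    · rw [D_succ_left_of_lt hlt, ih (k := k) (by omega),
        Nat.choose_symm_of_eq_add (show n = k + (k + 1) by omega)]
    · rw [ih hge]
end

section
/- Let F be a family of subsets of [n] over GF(2), and suppose every monomial in the reduced representation (mod the vanishing ideal of the characteristic vectors of F Δ F) of the indicator function g of the zero vector has degree at most d. Then there exists a polynomial g' ∈ GF(2)[x₁,…,xₙ] of degree at most d such that g'(0) = 1 and g'(v_T) = 0 for every nonempty T ∈ F Δ F. Consequently, if VC-dim(F Δ F) ≤ d, such a polynomial g' of degree at most d exists. -/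
open Finset MvPolynomial
open scoped symmDiff

/-- Characteristic vector over GF(2). -/
def charVec2 {n : ℕ} (T : Finset (Fin n)) : Fin n → ZMod 2 :=
  fun i => if i ∈ T then 1 else 0

noncomputable def monF {n : ℕ} (M : Finset (Fin n)) : MvPolynomial (Fin n) (ZMod 2) :=
  ∏ i ∈ M, X i

lemma eval_monF {n : ℕ} (M T : Finset (Fin n)) :
    eval (charVec2 T) (monF M) = if M ⊆ T then 1 else 0 := by
  simp only [monF, map_prod, eval_X, charVec2, Finset.prod_boole]
  rfl

lemma count_lemma {n : ℕ} (S M T : Finset (Fin n)) (hSM : S ⊆ M) (hne : T ∩ M ≠ S) :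
    ∑ R ∈ M.powerset.filter (S ⊆ ·), (if R ⊆ T then (1 : ZMod 2) else 0) = 0 := by
  classical
  rw [Finset.sum_boole]
  have hset : (M.powerset.filter (S ⊆ ·)).filter (· ⊆ T) = Finset.Icc S (M ∩ T) := by
    ext R
    simp only [Finset.mem_filter, Finset.mem_powerset, Finset.mem_Icc, Finset.le_iff_subset,
      Finset.subset_inter_iff]
    tauto
  rw [hset]
  by_cases hS2 : S ⊆ M ∩ T
  · rw [Finset.card_Icc_finset hS2]
    have hss : S ⊂ M ∩ T := by
      refine hS2.ssubset_of_ne ?_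
      intro h
      exact hne (by rw [Finset.inter_comm]; exact h.symm)
    have hk : (M ∩ T).card - S.card ≠ 0 := by
      have := Finset.card_lt_card hss
      omega
    have h2 : ((2 : ℕ) : ZMod 2) = 0 := by decide
    rw [Nat.cast_pow, h2, zero_pow hk]
  · rw [Finset.Icc_eq_empty (by simpa using hS2)]
    simp

lemma indicator_mem {n d : ℕ} (G : Finset (Finset (Fin n)))
    (hVC : ∀ M : Finset (Fin n), ShattersFam G M → M.card ≤ d) :
    ∃ g' : MvPolynomial (Fin n) (ZMod 2), g'.totalDegree ≤ d ∧
      ∀ T ∈ G, eval (charVec2 T) g' = if T = (∅ : Finset (Fin n)) then 1 else 0 := by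
  classical
  let φ : MvPolynomial (Fin n) (ZMod 2) → ({T // T ∈ G} → ZMod 2) :=
    fun p T => eval (charVec2 T.1) p
  let s : Set ({T // T ∈ G} → ZMod 2) :=
    {f | ∃ M : Finset (Fin n), ShattersFam G M ∧ f = φ (monF M)}
  let W : Submodule (ZMod 2) ({T // T ∈ G} → ZMod 2) := Submodule.span (ZMod 2) s
  have lemA : ∀ M : Finset (Fin n), φ (monF M) ∈ W := by
    intro M
    induction M using Finset.strongInduction with
    | _ M ih =>
      by_cases hsh : ShattersFam G M
      · exact Submodule.subset_span ⟨M, hsh, rfl⟩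
      · rw [ShattersFam] at hsh
        push_neg at hsh
        obtain ⟨S, hSM, hS⟩ := hsh
        have hMmem : M ∈ M.powerset.filter (S ⊆ ·) := by
          simp [Finset.mem_powerset, hSM]
        have key : φ (monF M) = ∑ R ∈ (M.powerset.filter (S ⊆ ·)).erase M, φ (monF R) := by
          funext T
          have h0 := count_lemma S M T.1 hSM
            (fun h => hS T.1 T.2 h)
          rw [← Finset.add_sum_erase _ _ hMmem] at h0
          simp only [Finset.sum_apply, φ, eval_monF]
          have := neg_eq_of_add_eq_zero_left h0
          rw [CharTwo.neg_eq] at this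
          exact this.symm
        rw [key]
        refine Submodule.sum_mem _ fun R hR => ?_
        obtain ⟨hRne, hRf⟩ := Finset.mem_erase.mp hR
        have hRM : R ⊆ M := Finset.mem_powerset.mp (Finset.mem_filter.mp hRf).1
        exact ih R (hRM.ssubset_of_ne hRne)
  have lemB : (fun T : {T // T ∈ G} => if T.1 = ∅ then (1 : ZMod 2) else 0) ∈ W := by
    have key : (fun T : {T // T ∈ G} => if T.1 = ∅ then (1 : ZMod 2) else 0)
        = ∑ B ∈ (Finset.univ : Finset (Fin n)).powerset, φ (monF B) := by
      funext T
      simp only [Finset.sum_apply, φ, eval_monF]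
      rw [Finset.sum_boole]
      have : (Finset.univ : Finset (Fin n)).powerset.filter (· ⊆ T.1) = T.1.powerset := by
        ext B; simp
      rw [this, Finset.card_powerset]
      by_cases hT : T.1 = ∅
      · simp [hT]
      · have hc : T.1.card ≠ 0 := by
          simpa [Finset.card_eq_zero] using hT
        have h2 : ((2 : ℕ) : ZMod 2) = 0 := by decide
        rw [Nat.cast_pow, h2, zero_pow hc, if_neg hT]
    rw [key]
    exact Submodule.sum_mem _ fun B _ => lemA B
  rw [Submodule.mem_span_set'] at lemB
  obtain ⟨m, c, v, hsum⟩ := lemB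
  have hv : ∀ i, ∃ M : Finset (Fin n), ShattersFam G M ∧ (v i : {T // T ∈ G} → ZMod 2) = φ (monF M) :=
    fun i => (v i).2
  choose Mi hMi hvMi using hv
  refine ⟨∑ i, c i • monF (Mi i), ?_, ?_⟩
  · refine le_trans (totalDegree_finset_sum _ _) (Finset.sup_le fun i _ => ?_)
    refine le_trans (totalDegree_smul_le _ _) (le_trans ?_ (hVC _ (hMi i)))
    refine le_trans (totalDegree_finset_prod _ _) ?_
    simp [totalDegree_X]
  · intro T hT
    have := congrFun hsum ⟨T, hT⟩
    simp only [Finset.sum_apply, Pi.smul_apply, hvMi, φ] at this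
    rw [← this]
    simp [smul_eval]

theorem exists_low_degree_indicator {n d : ℕ} (F : Finset (Finset (Fin n)))
    (hVC : ∀ M : Finset (Fin n), ShattersFam (symmDiffFam F) M → M.card ≤ d) :
    ∃ g' : MvPolynomial (Fin n) (ZMod 2), g'.totalDegree ≤ d ∧
      eval (0 : Fin n → ZMod 2) g' = 1 ∧
      ∀ T ∈ symmDiffFam F, T ≠ ∅ → eval (charVec2 T) g' = 0 := by
  rcases Finset.eq_empty_or_nonempty F with hF | ⟨A, hA⟩
  · exact ⟨1, by simp, by simp, by simp [symmDiffFam, hF]⟩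
  obtain ⟨g', hdeg, heval⟩ := indicator_mem (symmDiffFam F) hVC
  have hmem : (∅ : Finset (Fin n)) ∈ symmDiffFam F := by
    apply Finset.mem_image₂.mpr
    exact ⟨A, hA, A, hA, by simp [symmDiff_self]⟩
  have hzero : charVec2 (∅ : Finset (Fin n)) = (0 : Fin n → ZMod 2) := by
    funext i; simp [charVec2]
  refine ⟨g', hdeg, ?_, ?_⟩
  · rw [← hzero]
    simpa using heval ∅ hmem
  · intro T hT hTne
    simpa [hTne] using heval T hT
end
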